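/- arXiv:1911.01650 — 7 statements merged into one kernel-verified Lean document; each statement's English description precedes it below -/
import Mathlib

section
/- Let Φ be an irreducible root system with extended base Δ̃ = Δ ∪ {α₀}, where α₀ = −α̃. Let 𝒥 ⊊ Δ̃ be a proper subset. Then 𝒥 is a base (system of simple roots) for the root subsystem Φ_𝒥(ℤ) := Φ ∩ ℤ𝒥, i.e., every root in Φ that is an integer linear combination of elements of 𝒥 is either a nonnegative or a nonpositive integer combination of elements of 𝒥. -/
/-! Write a positive root `δ = ∑ dⱼ αⱼ`, so that `α̃ - δ = ∑ (cⱼ - dⱼ) αⱼ` with `0 ≤ dⱼ ≤ cⱼ`.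
If `δ ∈ ℤ𝒥`, its coordinates `dⱼ` at the simple roots `αⱼ ∉ 𝒥` can only come from `α₀ = -α̃`,
so `dⱼ = -a cⱼ` for the integral `α₀`-coefficient `a` of `δ`. When `α₀ ∈ 𝒥`, properness of `𝒥`
provides such an `αⱼ`, and `0 ≤ -a cⱼ ≤ cⱼ` forces `a ∈ {0, -1}`. For `a = 0`, `δ` is a
nonnegative combination of `𝒥 ∩ Δ`; for `a = -1`, so is `α̃ - δ`, and then
`δ = -(α₀ + (α̃ - δ))` is a nonpositive combination of `𝒥`. -/

open scoped RealInnerProductSpace Classical BigOperators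

noncomputable section

abbrev V (ℓ : ℕ) := EuclideanSpace ℝ (Fin ℓ)

/-- An irreducible crystallographic (reduced) root system in `ℝ^ℓ`, together with a choice of
positive system, base of simple roots, highest root with its marks `c i`, and the Weyl group
(generated by the reflections in the roots). -/
structure RootSystemData (ℓ : ℕ) where
  Φ : Set (V ℓ)
  finite : Φ.Finite
  nonzero : (0 : V ℓ) ∉ Φ
  spanning : Submodule.span ℝ Φ = ⊤
  neg_mem : ∀ α ∈ Φ, -α ∈ Φ
  reduced : ∀ α ∈ Φ, ∀ t : ℝ, t • α ∈ Φ → t = 1 ∨ t = -1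
  crystallographic : ∀ α ∈ Φ, ∀ β ∈ Φ, ∃ n : ℤ, 2 * ⟪α, β⟫ / ⟪β, β⟫ = (n : ℝ)
  reflect_mem : ∀ α ∈ Φ, ∀ β ∈ Φ, β - (2 * ⟪β, α⟫ / ⟪α, α⟫) • α ∈ Φ
  irreducible : ¬ ∃ Φ₁ Φ₂ : Set (V ℓ), Φ₁.Nonempty ∧ Φ₂.Nonempty ∧ Φ₁ ∪ Φ₂ = Φ ∧
      ∀ α ∈ Φ₁, ∀ β ∈ Φ₂, ⟪α, β⟫ = 0
  /-- the positive system `Φ⁺` -/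
  pos : Set (V ℓ)
  pos_subset : pos ⊆ Φ
  pos_choice : ∀ α ∈ Φ, (α ∈ pos ↔ -α ∉ pos)
  /-- the simple roots `α₁, …, α_ℓ` -/
  simple : Fin ℓ → V ℓ
  simple_mem : ∀ i, simple i ∈ pos
  simple_indep : LinearIndependent ℝ simple
  pos_comb : ∀ α ∈ pos, ∃ d : Fin ℓ → ℕ, α = ∑ i, (d i : ℝ) • simple i
  /-- the marks `c i` of the highest root -/
  c : Fin ℓ → ℕ
  c_pos : ∀ i, 0 < c i
  /-- the highest root `α̃` -/
  highest : V ℓ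
  highest_mem : highest ∈ pos
  highest_eq : highest = ∑ i, (c i : ℝ) • simple i
  highest_max : ∀ α ∈ pos, ∃ d : Fin ℓ → ℕ, highest - α = ∑ i, (d i : ℝ) • simple i
  /-- the Weyl group `W` -/
  W : Subgroup ((V ℓ) ≃ₗ[ℝ] (V ℓ))
  W_gen : W = Subgroup.closure
      {s : (V ℓ) ≃ₗ[ℝ] (V ℓ) | ∃ α ∈ Φ, ∀ x, s x = x - (2 * ⟪x, α⟫ / ⟪α, α⟫) • α}

namespace RootSystemData

variable {ℓ : ℕ} (R : RootSystemData ℓ)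

/-- The extended base `Δ̃ = {α₀, α₁, …, α_ℓ}`, with `none ↦ α₀ = -α̃`. -/
def ext : Option (Fin ℓ) → V ℓ
  | none => -R.highest
  | some i => R.simple i

/-- The extended marks, with `c₀ = 1`. -/
def cExt : Option (Fin ℓ) → ℕ
  | none => 1
  | some i => R.c i

/-- The Coxeter number `h = c₀ + c₁ + ⋯ + c_ℓ`. -/
def coxh : ℕ := ∑ i : Option (Fin ℓ), R.cExt i

/-- The descent statistic `dsc_Ψ(w) = ∑_{w(α_i) ∈ -Ψᶜ} c_i` (`Ψᶜ = Φ⁺ \ Ψ`). -/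
def dsc (Ψ : Set (V ℓ)) (w : (V ℓ) ≃ₗ[ℝ] (V ℓ)) : ℕ :=
  ∑ i : Option (Fin ℓ), if w (R.ext i) ∈ (-(R.pos \ Ψ) : Set (V ℓ)) then R.cExt i else 0

/-- `dsc̄_Ψ(w) = ∑_{w(α_i) ∈ -Ψ} c_i`. -/
def dscBar (Ψ : Set (V ℓ)) (w : (V ℓ) ≃ₗ[ℝ] (V ℓ)) : ℕ :=
  ∑ i : Option (Fin ℓ), if w (R.ext i) ∈ (-Ψ : Set (V ℓ)) then R.cExt i else 0

/-- `asc_Ψ(w) = ∑_{w(α_i) ∈ Ψᶜ} c_i`. -/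
def asc (Ψ : Set (V ℓ)) (w : (V ℓ) ≃ₗ[ℝ] (V ℓ)) : ℕ :=
  ∑ i : Option (Fin ℓ), if w (R.ext i) ∈ R.pos \ Ψ then R.cExt i else 0

/-- `asc̄_Ψ(w) = ∑_{w(α_i) ∈ Ψ} c_i`. -/
def ascBar (Ψ : Set (V ℓ)) (w : (V ℓ) ≃ₗ[ℝ] (V ℓ)) : ℕ :=
  ∑ i : Option (Fin ℓ), if w (R.ext i) ∈ Ψ then R.cExt i else 0

/-- The affine hyperplane `H_{α,m} = {x : (α,x) = m}`. -/
def Hyp {ℓ' : ℕ} (α : V ℓ') (m : ℤ) : Set (V ℓ') := {x | ⟪α, x⟫ = (m : ℝ)}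

/-- The complement of all the affine hyperplanes `H_{α,m}`, `α ∈ Φ⁺`, `m ∈ ℤ`. -/
def AffC : Set (V ℓ) := {x | ∀ α ∈ R.pos, ∀ m : ℤ, ⟪α, x⟫ ≠ (m : ℝ)}

/-- An alcove is a connected component of the complement of the affine hyperplanes. -/
def IsAlcove (A : Set (V ℓ)) : Prop :=
  ∃ x ∈ R.AffC, A = connectedComponentIn R.AffC x

/-- The half-open fundamental parallelepiped `P^◊ = {x : 0 < (α_i,x) ≤ 1 for all i}`. -/
def Pdia : Set (V ℓ) := {x | ∀ i, 0 < ⟪R.simple i, x⟫ ∧ ⟪R.simple i, x⟫ ≤ 1}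

/-- The partial closure `A^◊` of an alcove `A`: the points of the closure lying only on
walls `H_{α,m}` for which the alcove is on the lower (`<`) side. -/
def pc (A : Set (V ℓ)) : Set (V ℓ) :=
  {x ∈ closure A | ∀ α ∈ R.pos, ∀ m : ℤ, ⟪α, x⟫ = (m : ℝ) → ∀ y ∈ A, ⟪α, y⟫ < (m : ℝ)}

/-- The coweight lattice `Z(Φ^∨)`. -/
def coweightLat : AddSubgroup (V ℓ) where
  carrier := {x | ∀ i, ∃ n : ℤ, ⟪R.simple i, x⟫ = (n : ℝ)}
  add_mem' := by
    intro x y hx hy i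
    obtain ⟨n, hn⟩ := hx i
    obtain ⟨m, hm⟩ := hy i
    exact ⟨n + m, by push_cast; rw [inner_add_right, hn, hm]⟩
  zero_mem' := fun i => ⟨0, by simp⟩
  neg_mem' := by
    intro x hx i
    obtain ⟨n, hn⟩ := hx i
    exact ⟨-n, by push_cast; rw [inner_neg_right, hn]⟩

/-- The coroot lattice `Q(Φ^∨)`, generated by the simple coroots. -/
def corootLat : AddSubgroup (V ℓ) :=
  AddSubgroup.closure {v | ∃ i, v = (2 / ⟪R.simple i, R.simple i⟫) • R.simple i}

/-- The index of connection `f = [Z(Φ^∨) : Q(Φ^∨)]`. -/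
def conIndex : ℕ := (R.corootLat.addSubgroupOf R.coweightLat).index

/-- The open fundamental alcove `A^∘`. -/
def alc : Set (V ℓ) := {x | (∀ i, 0 < ⟪R.simple i, x⟫) ∧ ⟪R.highest, x⟫ < 1}

/-- The closed fundamental alcove `Ā^∘`. -/
def alcC : Set (V ℓ) := {x | (∀ i, 0 ≤ ⟪R.simple i, x⟫) ∧ ⟪R.highest, x⟫ ≤ 1}

/-- The Ehrhart counting function `L_P(q) = #(qP ∩ Z(Φ^∨))` (with value `0` for `q < 0`). -/
def LP (P : Set (V ℓ)) (q : ℤ) : ℕ :=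
  if q < 0 then 0 else Set.ncard {x : V ℓ | x ∈ R.coweightLat ∧ ∃ y ∈ P, x = (q : ℝ) • y}

/-- `S` is a facet of the partially closed alcove `A^◊`. -/
def IsFacetOf (A S : Set (V ℓ)) : Prop :=
  (∃ β ∈ R.pos, ∃ m : ℤ, S = R.pc A ∩ Hyp β m) ∧
    Module.finrank ℝ (vectorSpan ℝ S) = ℓ - 1

/-- `Ψ ⊆ Φ⁺` is compatible with the Worpitzky partition. -/
def Compatible (Ψ : Set (V ℓ)) : Prop :=
  ∀ A : Set (V ℓ), R.IsAlcove A → A ⊆ R.Pdia → ∀ α ∈ Ψ, ∀ m : ℤ,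
    (R.pc A ∩ Hyp α m).Nonempty →
      ∃ β ∈ Ψ, ∃ m' : ℤ, R.pc A ∩ Hyp α m ⊆ R.pc A ∩ Hyp β m' ∧
        R.IsFacetOf A (R.pc A ∩ Hyp β m')

/-- The characteristic quasi-polynomial of `Ψ` w.r.t. the root lattice: the number of points
of `(ℤ/q)^ℓ` avoiding all the subgroups determined by the roots of `Ψ`, whose coordinates in
the basis of simple roots are given by `crd`. -/
def chi (Ψ : Set (V ℓ)) (crd : V ℓ → Fin ℓ → ℕ) (q : ℕ) : ℕ :=
  Nat.card {z : Fin ℓ → ZMod q // ∀ α ∈ Ψ, ∑ i, (crd α i : ZMod q) * z i ≠ 0}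

def simpleBasis : Module.Basis (Fin ℓ) ℝ (V ℓ) :=
  basisOfLinearIndependentOfCardEqFinrank' R.simple R.simple_indep (by simp)

@[simp]
lemma simpleBasis_apply (j : Fin ℓ) : R.simpleBasis j = R.simple j := by
  simp [simpleBasis]

@[simp]
lemma simpleBasis_repr_sum (d : Fin ℓ → ℝ) :
    ⇑(R.simpleBasis.repr (∑ j, d j • R.simple j)) = d := by
  simpa using R.simpleBasis.repr_sum_self d

lemma mem_pos_or_neg_mem_pos {γ : V ℓ} (hγ : γ ∈ R.Φ) : γ ∈ R.pos ∨ -γ ∈ R.pos :=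
  or_iff_not_imp_left.mpr fun h => not_not.mp ((R.pos_choice γ hγ).not.mp h)

lemma sum_smul_ext_of_support_subset {S : Finset (Option (Fin ℓ))} (f : Option (Fin ℓ) → ℝ)
    (hf : ∀ i ∉ S, f i = 0) :
    ∑ i ∈ S, f i • R.ext i = f none • R.ext none + ∑ j, f (some j) • R.simple j := by
  rw [Finset.sum_subset (Finset.subset_univ S) fun i _ hi => by rw [hf i hi, zero_smul],
    Fintype.sum_option]
  rfl

lemma exists_repr_eq_neg_mul_c_of_mem_span_ext {S : Finset (Option (Fin ℓ))} {γ : V ℓ}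
    (hγ : γ ∈ Submodule.span ℤ (R.ext '' ↑S)) :
    ∃ a : ℤ, (none ∉ S → a = 0) ∧ ∀ j, some j ∉ S → R.simpleBasis.repr γ j = -a * R.c j := by
  induction hγ using Submodule.span_induction with
  | mem x hx =>
    obtain ⟨i, hi, rfl⟩ := hx
    cases i with
    | none =>
      refine ⟨1, fun h => absurd hi h, fun j _ => ?_⟩
      simp only [ext, R.highest_eq, map_neg, Finsupp.coe_neg, Pi.neg_apply, simpleBasis_repr_sum]
      ring
    | some i =>
      refine ⟨0, fun _ => rfl, fun j hj => ?_⟩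
      have hij : i ≠ j := by rintro rfl; exact hj hi
      simp [ext, ← simpleBasis_apply, hij]
  | zero => exact ⟨0, fun _ => rfl, fun j _ => by simp⟩
  | add x y _ _ hx hy =>
    obtain ⟨a, ha₀, ha⟩ := hx
    obtain ⟨b, hb₀, hb⟩ := hy
    refine ⟨a + b, fun h => by simp [ha₀ h, hb₀ h], fun j hj => ?_⟩
    simp only [map_add, Finsupp.add_apply, ha j hj, hb j hj]
    push_cast
    ring
  | smul n x _ hx =>
    obtain ⟨a, ha₀, ha⟩ := hx
    refine ⟨n * a, fun h => by simp [ha₀ h], fun j hj => ?_⟩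
    simp only [map_zsmul, Finsupp.smul_apply, ha j hj, zsmul_eq_mul]
    push_cast
    ring

lemma exists_coeffs_add_eq_marks_of_mem_pos {δ : V ℓ} (hδ : δ ∈ R.pos) :
    ∃ d e : Fin ℓ → ℕ, δ = ∑ j, (d j : ℝ) • R.simple j ∧
      R.highest - δ = ∑ j, (e j : ℝ) • R.simple j ∧ ∀ j, R.c j = d j + e j := by
  obtain ⟨d, hd⟩ := R.pos_comb δ hδ
  obtain ⟨e, he⟩ := R.highest_max δ hδ
  refine ⟨d, e, hd, he, fun j => ?_⟩
  have hj := congrArg (fun v => R.simpleBasis.repr v j) he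
  simp only [hd, R.highest_eq, ← Finset.sum_sub_distrib, ← sub_smul, simpleBasis_repr_sum] at hj
  have : (R.c j : ℝ) = d j + e j := by linarith
  exact_mod_cast this

lemma eq_sum_or_eq_neg_sum_of_mem_pos_of_mem_span {S : Finset (Option (Fin ℓ))} (hS : S ≠ Finset.univ) {δ : V ℓ}
    (hδ : δ ∈ R.pos) (hspan : δ ∈ Submodule.span ℤ (R.ext '' ↑S)) :
    (∃ d : Option (Fin ℓ) → ℕ, δ = ∑ i ∈ S, (d i : ℝ) • R.ext i) ∨
      (∃ d : Option (Fin ℓ) → ℕ, δ = -∑ i ∈ S, (d i : ℝ) • R.ext i) := by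
  obtain ⟨d, e, hd, he, hc⟩ := R.exists_coeffs_add_eq_marks_of_mem_pos hδ
  obtain ⟨a, ha₀, ha⟩ := R.exists_repr_eq_neg_mul_c_of_mem_span_ext hspan
  have hda : ∀ j, some j ∉ S → (d j : ℤ) = -a * R.c j := fun j hj => by
    have := ha j hj
    rw [hd, simpleBasis_repr_sum] at this
    exact_mod_cast this
  have ha' : a = 0 ∨ (a = -1 ∧ none ∈ S) := by
    by_cases hn : none ∈ S
    · obtain ⟨i, hi⟩ := not_forall.mp (mt Finset.eq_univ_iff_forall.mpr hS)
      obtain ⟨j, rfl⟩ := Option.ne_none_iff_exists'.mp (ne_of_mem_of_not_mem hn hi).symm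
      have h₁ := hda j hi
      have h₂ : (R.c j : ℤ) = d j + e j := by exact_mod_cast hc j
      have h₃ : (0 : ℤ) < R.c j := by exact_mod_cast R.c_pos j
      have : -1 ≤ a ∧ a ≤ 0 := by constructor <;> nlinarith
      obtain h | h : a = 0 ∨ a = -1 := by omega
      exacts [.inl h, .inr ⟨h, hn⟩]
    · exact .inl (ha₀ hn)
  rcases ha' with rfl | ⟨rfl, hn⟩
  · refine .inl ⟨fun i => i.elim 0 d, ?_⟩
    rw [R.sum_smul_ext_of_support_subset _ fun i hi => ?_]
    · simp [hd]
    · cases i with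
      | none => simp
      | some j => simpa using hda j hi
  · refine .inr ⟨fun i => i.elim 1 e, ?_⟩
    rw [R.sum_smul_ext_of_support_subset _ fun i hi => ?_]
    · simp [ext, ← he]
    · cases i with
      | none => exact absurd hn hi
      | some j =>
        have := hda j hi
        have := hc j
        simp only [Option.elim_some, Nat.cast_eq_zero]
        omega

end RootSystemData

/-- a proper subset `𝒥 ⊊ Δ̃` is a base for `Φ_𝒥(ℤ) = Φ ∩ ℤ𝒥`: every root that is
an integral combination of `𝒥` is a nonnegative or nonpositive integral combination of `𝒥`. -/
theorem proper_subset_of_extended_base_is_base {ℓ : ℕ} (R : RootSystemData ℓ)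
    (S : Finset (Option (Fin ℓ))) (hS : S ≠ Finset.univ) :
    ∀ γ ∈ R.Φ, γ ∈ Submodule.span ℤ (R.ext '' ↑S) →
      (∃ d : Option (Fin ℓ) → ℕ, γ = ∑ i ∈ S, (d i : ℝ) • R.ext i) ∨
      (∃ d : Option (Fin ℓ) → ℕ, γ = -∑ i ∈ S, (d i : ℝ) • R.ext i) := by
  intro γ hγ hspan
  rcases R.mem_pos_or_neg_mem_pos hγ with hpos | hneg
  · exact R.eq_sum_or_eq_neg_sum_of_mem_pos_of_mem_span hS hpos hspan
  · rcases R.eq_sum_or_eq_neg_sum_of_mem_pos_of_mem_span hS hneg (neg_mem hspan) with ⟨d, hd⟩ | ⟨d, hd⟩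
    · exact .inr ⟨d, by rw [← hd, neg_neg]⟩
    · exact .inl ⟨d, neg_injective hd⟩
end
end

section
/- Let Φ be an irreducible root system, w ∈ W an element of the Weyl group, and 𝒥 ⊊ Δ̃ a proper subset of the extended base. Set D := −w(𝒥) = {−w(α) : α ∈ 𝒥}. Then D is a base for Φ_D(ℤ) := Φ ∩ ℤD. -/
open scoped RealInnerProductSpace Classical BigOperators

noncomputable section

/-!
Since `w` permutes `Φ`, it suffices to treat `-𝒥` itself. Up to scaling, the only linear relation
among the elements `αᵢ` of `Δ̃` is `∑ cᵢ αᵢ = 0`, where all `cᵢ > 0`; hence every proper subset of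
`Δ̃` is linearly independent. A combination `δ = ∑ bᵢ αᵢ` has simple coordinates `bⱼ - b₀ cⱼ`; if
`δ` is a positive root these lie between `0` and `cⱼ`, i.e. `b₀ cᵢ ≤ bᵢ ≤ (b₀ + 1) cᵢ` for every
`i`. If moreover some `b_{i₀}` vanishes, the integer `b₀` must be `0` or `-1`, so all `bᵢ` have the
same sign; negative roots follow by negation.
-/

open Pointwise

section Reflection

variable {E : Type*} [NormedAddCommGroup E] [InnerProductSpace ℝ E]

lemma involutive_of_eq_reflection {s : E → E} {α : E} (hα : α ≠ 0)
    (hs : ∀ x, s x = x - (2 * ⟪x, α⟫ / ⟪α, α⟫) • α) : Function.Involutive s := by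
  have hαα : ⟪α, α⟫ ≠ 0 := inner_self_ne_zero.mpr hα
  intro x
  rw [hs, hs, inner_sub_left, real_inner_smul_left, div_mul_cancel₀ _ hαα]
  have : 2 * (⟪x, α⟫ - 2 * ⟪x, α⟫) / ⟪α, α⟫ = -(2 * ⟪x, α⟫ / ⟪α, α⟫) := by ring
  rw [this, neg_smul, sub_neg_eq_add, sub_add_cancel]

end Reflection

section IntegerCombinations

variable {ι M : Type*} [Fintype ι] [AddCommGroup M] [Module ℝ M]

lemma exists_int_coeffs_of_mem_span_image {v : ι → M} {S : Set ι} {x : M}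
    (hx : x ∈ Submodule.span ℤ (v '' S)) :
    ∃ a : ι → ℤ, (∀ i ∉ S, a i = 0) ∧ x = ∑ i, (a i : ℝ) • v i := by
  obtain ⟨l, hl, rfl⟩ := (Finsupp.mem_span_image_iff_linearCombination ℤ).mp hx
  refine ⟨l, fun i hi => Finsupp.notMem_support_iff.mp fun h => hi (hl h), ?_⟩
  rw [Finsupp.linearCombination_apply, Finsupp.sum_fintype _ _ fun i => zero_smul ℤ (v i)]
  simp only [Int.cast_smul_eq_zsmul]

lemma sum_toNat_smul_eq {a : ι → ℤ} (ha : ∀ i, 0 ≤ a i) {S : Finset ι} (hS : ∀ i ∉ S, a i = 0)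
    (v : ι → M) : ∑ i ∈ S, ((a i).toNat : ℝ) • v i = ∑ i, (a i : ℝ) • v i := by
  rw [← Finset.sum_subset (Finset.subset_univ S) fun i _ hi => by rw [hS i hi, Int.cast_zero,
    zero_smul]]
  refine Finset.sum_congr rfl fun i _ => ?_
  rw [← Int.cast_natCast, Int.toNat_of_nonneg (ha i)]

end IntegerCombinations

namespace RootSystemData

variable {ℓ : ℕ} (R : RootSystemData ℓ)

lemma W_le_stabilizer : R.W ≤ MulAction.stabilizer ((V ℓ) ≃ₗ[ℝ] (V ℓ)) R.Φ := by
  rw [R.W_gen, Subgroup.closure_le]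
  rintro s ⟨α, hα, hs⟩
  have hs_inv := involutive_of_eq_reflection (fun h => R.nonzero (h ▸ hα)) hs
  have hmaps : ∀ β ∈ R.Φ, s β ∈ R.Φ := fun β hβ => hs β ▸ R.reflect_mem α hα β hβ
  exact (Set.image_subset_iff.mpr hmaps).antisymm fun β hβ => ⟨s β, hmaps β hβ, hs_inv β⟩

lemma symm_apply_mem_Φ {w : (V ℓ) ≃ₗ[ℝ] (V ℓ)} (hw : w ∈ R.W) {γ : V ℓ} (hγ : γ ∈ R.Φ) :
    w.symm γ ∈ R.Φ := by
  have hstab : w⁻¹ • R.Φ = R.Φ := R.W_le_stabilizer (R.W.inv_mem hw)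
  rw [← hstab]
  exact Set.smul_mem_smul_set hγ

lemma cExt_pos (i : Option (Fin ℓ)) : 0 < R.cExt i := by
  cases i with
  | none => exact Nat.one_pos
  | some j => exact R.c_pos j

lemma sum_smul_ext (b : Option (Fin ℓ) → ℝ) :
    ∑ i, b i • R.ext i = ∑ j, (b (some j) - b none * R.c j) • R.simple j := by
  simp only [Fintype.sum_option, ext, R.highest_eq, smul_neg, Finset.smul_sum, smul_smul,
    sub_smul, Finset.sum_sub_distrib]
  abel

lemma eq_of_sum_smul_simple_eq {x y : Fin ℓ → ℝ}
    (h : ∑ j, x j • R.simple j = ∑ j, y j • R.simple j) : x = y :=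
  funext (Fintype.linearIndependent_iffₛ.mp R.simple_indep x y h)

lemma eq_mul_cExt_of_sum_smul_ext_eq_zero {g : Option (Fin ℓ) → ℝ}
    (h : ∑ i, g i • R.ext i = 0) (i : Option (Fin ℓ)) : g i = g none * R.cExt i := by
  cases i with
  | none => simp [cExt]
  | some j =>
    have h' : ∑ j, (g (some j) - g none * R.c j) • R.simple j = ∑ j, (0 : ℝ) • R.simple j := by
      rw [← R.sum_smul_ext, h]
      simp
    have := congrFun (R.eq_of_sum_smul_simple_eq h') j
    simp only [cExt]
    linarith

lemma linearIndepOn_ext_compl_singleton (i₀ : Option (Fin ℓ)) :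
    LinearIndepOn ℝ R.ext {i₀}ᶜ := by
  rw [linearIndepOn_iff]
  intro l hl hcomb
  rw [Finsupp.linearCombination_apply,
    Finsupp.sum_fintype _ _ fun i => zero_smul ℝ (R.ext i)] at hcomb
  have hi₀ : l i₀ = 0 := Finsupp.notMem_support_iff.mp fun h => hl h rfl
  have hrel := R.eq_mul_cExt_of_sum_smul_ext_eq_zero hcomb
  have hnone : l none = 0 := by
    have := hrel i₀
    rw [hi₀, eq_comm, mul_eq_zero] at this
    exact this.resolve_right (by exact_mod_cast (R.cExt_pos i₀).ne')
  ext i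
  rw [hrel i, hnone, zero_mul, Finsupp.coe_zero, Pi.zero_apply]

lemma coeff_mem_Icc_of_mem_pos {δ : V ℓ} (hδ : δ ∈ R.pos) {x : Fin ℓ → ℝ}
    (hx : δ = ∑ j, x j • R.simple j) (j : Fin ℓ) : x j ∈ Set.Icc 0 (R.c j : ℝ) := by
  obtain ⟨d, hd⟩ := R.pos_comb δ hδ
  obtain ⟨d', hd'⟩ := R.highest_max δ hδ
  have hxd : x = fun j => (d j : ℝ) := R.eq_of_sum_smul_simple_eq (hx.symm.trans hd)
  have hxd' : (fun j => (R.c j : ℝ) - x j) = fun j => (d' j : ℝ) := by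
    refine R.eq_of_sum_smul_simple_eq ?_
    simp only [sub_smul, Finset.sum_sub_distrib, ← R.highest_eq, ← hx, hd']
  have h1 : x j = d j := congrFun hxd j
  have h2 : (R.c j : ℝ) - x j = d' j := congrFun hxd' j
  constructor
  · rw [h1]; positivity
  · linarith [(d' j).cast_nonneg (α := ℝ)]

lemma mul_cExt_le_of_mem_pos {δ : V ℓ} (hδ : δ ∈ R.pos) {b : Option (Fin ℓ) → ℝ}
    (hb : δ = ∑ i, b i • R.ext i) (i : Option (Fin ℓ)) :
    b none * R.cExt i ≤ b i ∧ b i ≤ (b none + 1) * R.cExt i := by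
  cases i with
  | none => simp [cExt]
  | some j =>
    have := R.coeff_mem_Icc_of_mem_pos hδ (hb.trans (R.sum_smul_ext b)) j
    simp only [cExt, Set.mem_Icc] at this ⊢
    constructor <;> linarith

lemma nonneg_or_nonpos_of_mem_pos {δ : V ℓ} (hδ : δ ∈ R.pos) {b : Option (Fin ℓ) → ℤ}
    (hb : δ = ∑ i, (b i : ℝ) • R.ext i) {i₀ : Option (Fin ℓ)} (hi₀ : b i₀ = 0) :
    (∀ i, 0 ≤ b i) ∨ (∀ i, b i ≤ 0) := by
  have hbounds : ∀ i, b none * R.cExt i ≤ b i ∧ b i ≤ (b none + 1) * R.cExt i := fun i => by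
    exact_mod_cast R.mul_cExt_le_of_mem_pos hδ hb i
  have hc := R.cExt_pos i₀
  have hnone : b none = 0 ∨ b none = -1 := by
    have := hbounds i₀
    rw [hi₀] at this
    have h1 : b none ≤ 0 := nonpos_of_mul_nonpos_left this.1 (by exact_mod_cast hc)
    have h2 : -1 ≤ b none := by nlinarith [this.2]
    omega
  rcases hnone with h | h
  · exact Or.inl fun i => by simpa [h] using (hbounds i).1
  · exact Or.inr fun i => by simpa [h] using (hbounds i).2

lemma nonneg_or_nonpos_of_mem_Φ {δ : V ℓ} (hδ : δ ∈ R.Φ) {b : Option (Fin ℓ) → ℤ}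
    (hb : δ = ∑ i, (b i : ℝ) • R.ext i) {i₀ : Option (Fin ℓ)} (hi₀ : b i₀ = 0) :
    (∀ i, 0 ≤ b i) ∨ (∀ i, b i ≤ 0) := by
  by_cases hpos : δ ∈ R.pos
  · exact R.nonneg_or_nonpos_of_mem_pos hpos hb hi₀
  have hneg : -δ ∈ R.pos := not_not.mp fun h => hpos ((R.pos_choice δ hδ).mpr h)
  have hb' : -δ = ∑ i, ((-b i : ℤ) : ℝ) • R.ext i := by
    simp only [hb, Int.cast_neg, neg_smul, Finset.sum_neg_distrib]
  rcases R.nonneg_or_nonpos_of_mem_pos hneg hb' (by rw [hi₀, neg_zero]) with h | h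
  · exact Or.inr fun i => by simpa using h i
  · exact Or.inl fun i => by simpa using h i

end RootSystemData

/-- for `w ∈ W` and a proper subset `𝒥 ⊊ Δ̃`, the set `D = -w(𝒥)` is a base for
`Φ_D(ℤ) = Φ ∩ ℤD`: `D` is linearly independent and every root that is an integral combination
of `D` is a nonnegative or nonpositive integral combination of `D`. -/
theorem neg_weyl_image_of_proper_subset_is_base {ℓ : ℕ} (R : RootSystemData ℓ)
    (w : (V ℓ) ≃ₗ[ℝ] (V ℓ)) (hw : w ∈ R.W)
    (S : Finset (Option (Fin ℓ))) (hS : S ≠ Finset.univ) :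
    LinearIndependent ℝ (fun i : {i // i ∈ S} => -(w (R.ext i))) ∧
    ∀ γ ∈ R.Φ, γ ∈ Submodule.span ℤ ((fun i => -(w (R.ext i))) '' ↑S) →
      (∃ d : Option (Fin ℓ) → ℕ, γ = ∑ i ∈ S, (d i : ℝ) • (-(w (R.ext i)))) ∨
      (∃ d : Option (Fin ℓ) → ℕ, γ = -∑ i ∈ S, (d i : ℝ) • (-(w (R.ext i)))) := by
  obtain ⟨i₀, hi₀⟩ : ∃ i₀, i₀ ∉ S := by simpa [Finset.eq_univ_iff_forall] using hS
  have hS_sub : (S : Set (Option (Fin ℓ))) ⊆ {i₀}ᶜ := fun i hi h => hi₀ (h ▸ hi)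
  refine ⟨((R.linearIndepOn_ext_compl_singleton i₀).mono hS_sub).map'
    (w.trans (LinearEquiv.neg ℝ)).toLinearMap (w.trans (LinearEquiv.neg ℝ)).ker, ?_⟩
  intro γ hγ hspan
  obtain ⟨a, haS, rfl⟩ := exists_int_coeffs_of_mem_span_image hspan
  have hδ : w.symm (∑ i, (a i : ℝ) • -(w (R.ext i))) = ∑ i, ((-a i : ℤ) : ℝ) • R.ext i := by
    simp [map_sum]
  rcases R.nonneg_or_nonpos_of_mem_Φ (hδ ▸ R.symm_apply_mem_Φ hw hγ) rfl
    (by rw [haS i₀ hi₀, neg_zero]) with h | h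
  · refine Or.inr ⟨fun i => (-a i).toNat, ?_⟩
    rw [sum_toNat_smul_eq h (fun i hi => by rw [haS i hi, neg_zero])]
    simp
  · refine Or.inl ⟨fun i => (a i).toNat, ?_⟩
    rw [sum_toNat_smul_eq (fun i => by simpa using h i) haS]
end
end

section
/- (Worpitzky partition) The fundamental parallelepiped P^◊ = Σ_{i=1}^ℓ (0,1] ϖ_i^∨ is the disjoint union of the partial closures A_i^◊ of the N = #W/f alcoves A_i^∘ contained in P^◊, where the partial closure of an alcove {x : (α,x) > k_α (α ∈ I), (β,x) < k_β (β ∈ J)} is obtained by replacing each strict inequality (β,x) < k_β with (β,x) ≤ k_β. -/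
open scoped RealInnerProductSpace Classical BigOperators

noncomputable section

/-! Every alcove is a box `k_α < (α, z) < k_α + 1` (`α ∈ Φ⁺`), being a convex component of the
complement of the walls. A point `x` of its partial closure forces `k_α = ⌈(α, x)⌉ - 1`, so distinct
partial closures are disjoint. Conversely, for `x ∈ P^◊` every positive root pairs positively with
`x`, so the points `t • x`, `t → 1⁻`, lie in that box, which is then an alcove inside `P^◊` whose
partial closure contains `x`. -/

open Set Filter Topology

theorem IsPreconnected.floor_eq_of_forall_ne_intCast {X : Type*} [TopologicalSpace X]
    {s : Set X} (hs : IsPreconnected s) {f : X → ℝ} (hf : ContinuousOn f s)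
    (hf_int : ∀ z ∈ s, ∀ m : ℤ, f z ≠ m) {w z : X} (hw : w ∈ s) (hz : z ∈ s) :
    ⌊f z⌋ = ⌊f w⌋ := by
  suffices key : ∀ w ∈ s, ∀ z ∈ s, ⌊f z⌋ ≤ ⌊f w⌋ from
    le_antisymm (key w hw z hz) (key z hz w hw)
  intro w hw z hz
  by_contra! hlt
  have hmem : (⌊f z⌋ : ℝ) ∈ Icc (f w) (f z) := ⟨(Int.floor_lt.mp hlt).le, Int.floor_le _⟩
  obtain ⟨u, hu, hfu⟩ := hs.intermediate_value hw hz hf hmem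
  exact hf_int u hu _ hfu

namespace RootSystemData

variable {ℓ : ℕ} (R : RootSystemData ℓ)

def box (k : V ℓ → ℤ) : Set (V ℓ) :=
  {z | ∀ α ∈ R.pos, (k α : ℝ) < ⟪α, z⟫ ∧ ⟪α, z⟫ < k α + 1}

/-- The only alcove whose partial closure can contain `x`. -/
def boxBelow (x : V ℓ) : Set (V ℓ) := R.box fun α => ⌈⟪α, x⟫⌉ - 1

lemma mem_boxBelow {x z : V ℓ} : z ∈ R.boxBelow x ↔
    ∀ α ∈ R.pos, (⌈⟪α, x⟫⌉ : ℝ) - 1 < ⟪α, z⟫ ∧ ⟪α, z⟫ < ⌈⟪α, x⟫⌉ := by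
  simp [boxBelow, box]

lemma convex_box (k : V ℓ → ℤ) : Convex ℝ (R.box k) := by
  have : R.box k = ⋂ α ∈ R.pos, (innerSL ℝ α) ⁻¹' Ioo (k α : ℝ) (k α + 1) := by
    ext z
    simp [box]
  rw [this]
  exact convex_iInter₂ fun α _ => (convex_Ioo _ _).linear_preimage (innerSL ℝ α).toLinearMap

lemma box_subset_AffC (k : V ℓ → ℤ) : R.box k ⊆ R.AffC := by
  intro z hz α hα m hm
  obtain ⟨h₁, h₂⟩ := hz α hα
  rw [hm] at h₁ h₂
  have : k α < m := by exact_mod_cast h₁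
  have : m < k α + 1 := by exact_mod_cast h₂
  omega

lemma connectedComponentIn_AffC_eq_box {k : V ℓ → ℤ} {w : V ℓ} (hw : w ∈ R.box k) :
    connectedComponentIn R.AffC w = R.box k := by
  refine Subset.antisymm (fun z hz α hα => ?_) <|
    (R.convex_box k).isPreconnected.subset_connectedComponentIn hw (R.box_subset_AffC k)
  have hsub := connectedComponentIn_subset R.AffC w
  have hfloor : ⌊⟪α, z⟫⌋ = ⌊⟪α, w⟫⌋ :=
    isPreconnected_connectedComponentIn.floor_eq_of_forall_ne_intCast
      (innerSL ℝ α).continuous.continuousOn (fun u hu => hsub hu α hα)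
      (mem_connectedComponentIn (R.box_subset_AffC k hw)) hz
  have hkw : ⌊⟪α, w⟫⌋ = k α := Int.floor_eq_iff.mpr ⟨(hw α hα).1.le, (hw α hα).2⟩
  obtain ⟨hlo, hhi⟩ := Int.floor_eq_iff.mp (hfloor.trans hkw)
  exact ⟨hlo.lt_of_ne fun h => hsub hz α hα (k α) h.symm, hhi⟩

lemma isAlcove_iff {A : Set (V ℓ)} :
    R.IsAlcove A ↔ ∃ k, (R.box k).Nonempty ∧ A = R.box k := by
  constructor
  · rintro ⟨w, hw, rfl⟩
    have hwk : w ∈ R.box fun α => ⌊⟪α, w⟫⌋ := fun α hα =>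
      ⟨(Int.floor_le _).lt_of_ne fun h => hw α hα _ h.symm, Int.lt_floor_add_one _⟩
    exact ⟨_, ⟨w, hwk⟩, R.connectedComponentIn_AffC_eq_box hwk⟩
  · rintro ⟨k, ⟨w, hw⟩, rfl⟩
    exact ⟨w, R.box_subset_AffC k hw, (R.connectedComponentIn_AffC_eq_box hw).symm⟩

lemma closure_box_subset (k : V ℓ → ℤ) :
    closure (R.box k) ⊆ {z | ∀ α ∈ R.pos, (k α : ℝ) ≤ ⟪α, z⟫ ∧ ⟪α, z⟫ ≤ k α + 1} := by
  have : {z | ∀ α ∈ R.pos, (k α : ℝ) ≤ ⟪α, z⟫ ∧ ⟪α, z⟫ ≤ k α + 1} =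
      ⋂ α ∈ R.pos, (innerSL ℝ α) ⁻¹' Icc (k α : ℝ) (k α + 1) := by
    ext z
    simp
  rw [this]
  exact closure_minimal (fun z hz => by simpa using fun α hα => ⟨(hz α hα).1.le, (hz α hα).2.le⟩)
    (isClosed_biInter fun α _ => isClosed_Icc.preimage (innerSL ℝ α).continuous)

lemma eq_boxBelow_of_mem_pc {A : Set (V ℓ)} (hA : R.IsAlcove A) {x : V ℓ} (hx : x ∈ R.pc A) :
    A = R.boxBelow x := by
  obtain ⟨k, ⟨y, hy⟩, rfl⟩ := R.isAlcove_iff.mp hA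
  have hk : ∀ α ∈ R.pos, k α = ⌈⟪α, x⟫⌉ - 1 := by
    intro α hα
    -- the closure allows `(α, x) = k α`, but then `A` would lie below that wall
    obtain ⟨hlo, hhi⟩ := R.closure_box_subset k hx.1 α hα
    have hne : ⟪α, x⟫ ≠ k α := fun h => (hx.2 α hα _ h y hy).not_gt (hy α hα).1
    have : ⌈⟪α, x⟫⌉ = k α + 1 := Int.ceil_eq_iff.mpr ⟨by push_cast; linarith [hlo.lt_of_ne' hne],
      by push_cast; exact hhi⟩
    omega
  ext z
  exact forall₂_congr fun α hα => by rw [hk α hα]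

lemma mem_pc_boxBelow {x : V ℓ} (hx : x ∈ closure (R.boxBelow x)) : x ∈ R.pc (R.boxBelow x) := by
  refine ⟨hx, fun α hα m hm y hy => ?_⟩
  have := ((R.mem_boxBelow.mp hy) α hα).2
  rwa [hm, Int.ceil_intCast] at this

lemma mem_closure_boxBelow {x : V ℓ} (hx : ∀ α ∈ R.pos, 0 < ⟪α, x⟫) :
    x ∈ closure (R.boxBelow x) := by
  have hlim : Tendsto (fun t : ℝ => t • x) (𝓝[<] 1) (𝓝 x) :=
    ((continuous_id.smul continuous_const).tendsto' 1 x (one_smul ℝ x)).mono_left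
      nhdsWithin_le_nhds
  refine mem_closure_of_tendsto hlim (Eventually.mono ?_ fun t ht => R.mem_boxBelow.mpr ht)
  refine ((R.finite.subset R.pos_subset).eventually_all).mpr fun α hα => ?_
  have hinner : Tendsto (fun t : ℝ => ⟪α, t • x⟫) (𝓝[<] 1) (𝓝 ⟪α, x⟫) :=
    ((innerSL ℝ α).continuous.tendsto x).comp hlim
  have hceil : (⌈⟪α, x⟫⌉ : ℝ) - 1 < ⟪α, x⟫ := by linarith [Int.ceil_lt_add_one ⟪α, x⟫]
  filter_upwards [hinner.eventually_const_lt hceil, self_mem_nhdsWithin] with t hlo (ht : t < 1)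
  refine ⟨hlo, ?_⟩
  rw [real_inner_smul_right]
  nlinarith [Int.le_ceil ⟪α, x⟫, hx α hα]

lemma inner_pos_of_mem_Pdia {x : V ℓ} (hx : x ∈ R.Pdia) {α : V ℓ} (hα : α ∈ R.pos) :
    0 < ⟪α, x⟫ := by
  obtain ⟨d, rfl⟩ := R.pos_comb α hα
  have hd : ∃ i ∈ Finset.univ, d i ≠ 0 := by
    by_contra! h
    exact R.nonzero (by simpa [h] using R.pos_subset hα)
  obtain ⟨i, -, hi⟩ := hd
  rw [sum_inner]
  refine Finset.sum_pos' (fun j _ => ?_) ⟨i, Finset.mem_univ i, ?_⟩ <;>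
    rw [real_inner_smul_left]
  · exact mul_nonneg (Nat.cast_nonneg _) (hx j).1.le
  · exact mul_pos (by positivity) (hx i).1

lemma boxBelow_subset_Pdia {x : V ℓ} (hx : x ∈ R.Pdia) : R.boxBelow x ⊆ R.Pdia := by
  intro z hz i
  have hceil : ⌈⟪R.simple i, x⟫⌉ = 1 :=
    Int.ceil_eq_iff.mpr ⟨by push_cast; linarith [(hx i).1], by exact_mod_cast (hx i).2⟩
  have := (R.mem_boxBelow.mp hz) (R.simple i) (R.simple_mem i)
  rw [hceil, Int.cast_one] at this
  exact ⟨by linarith, by linarith⟩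

lemma pc_subset_Pdia {A : Set (V ℓ)} (hA : R.IsAlcove A) (hAP : A ⊆ R.Pdia) :
    R.pc A ⊆ R.Pdia := by
  intro x hx i
  have hAx := R.eq_boxBelow_of_mem_pc hA hx
  obtain ⟨y, hy⟩ : A.Nonempty := by
    obtain ⟨k, hk, rfl⟩ := R.isAlcove_iff.mp hA
    exact hk
  obtain ⟨hy₀, hy₁⟩ := hAP hy i
  obtain ⟨hlo, hhi⟩ := (R.mem_boxBelow.mp (hAx ▸ hy)) (R.simple i) (R.simple_mem i)
  have h₁ : (0 : ℤ) < ⌈⟪R.simple i, x⟫⌉ := by exact_mod_cast hy₀.trans hhi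
  have h₂ : ⌈⟪R.simple i, x⟫⌉ < 2 := by
    have : (⌈⟪R.simple i, x⟫⌉ : ℝ) < 2 := by linarith
    exact_mod_cast this
  exact ⟨Int.one_le_ceil_iff.mp h₁, by exact_mod_cast Int.ceil_le.mp (by omega : _ ≤ (1 : ℤ))⟩

end RootSystemData

/-- Worpitzky partition: `P^◊` is the disjoint union of the partial closures of
the alcoves contained in `P^◊`. -/
theorem worpitzky_partition {ℓ : ℕ} (R : RootSystemData ℓ) :
    (⋃ A ∈ {A : Set (V ℓ) | R.IsAlcove A ∧ A ⊆ R.Pdia}, R.pc A) = R.Pdia ∧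
    {A : Set (V ℓ) | R.IsAlcove A ∧ A ⊆ R.Pdia}.PairwiseDisjoint R.pc := by
  refine ⟨Subset.antisymm (iUnion₂_subset fun A hA => R.pc_subset_Pdia hA.1 hA.2) ?_, ?_⟩
  · intro x hx
    have hcl := R.mem_closure_boxBelow fun α hα => R.inner_pos_of_mem_Pdia hx hα
    have halc : R.IsAlcove (R.boxBelow x) :=
      R.isAlcove_iff.mpr ⟨_, closure_nonempty_iff.mp ⟨x, hcl⟩, rfl⟩
    exact mem_biUnion ⟨halc, R.boxBelow_subset_Pdia hx⟩ (R.mem_pc_boxBelow hcl)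
  · intro A hA B hB hAB
    refine disjoint_left.mpr fun x hxA hxB => hAB ?_
    exact (R.eq_boxBelow_of_mem_pc hA.1 hxA).trans (R.eq_boxBelow_of_mem_pc hB.1 hxB).symm
end
end

section
/- Let Φ be an irreducible root system with fundamental alcove A^∘ = {x : (α_i,x) > 0 (1 ≤ i ≤ ℓ), (α̃,x) < 1}. For all integers q, the Ehrhart counting functions with respect to the coweight lattice satisfy L_{A^∘}(q) = L_{Ā^∘}(q − h), where h is the Coxeter number. More generally, for {i₁,…,i_k} ⊆ {0,1,…,ℓ} and q > c_{i₁} + ⋯ + c_{i_k}, the number of coweight lattice points of q·Ā^∘ not lying on the facets F_{i₁},…,F_{i_k} equals L_{Ā^∘}(q − (c_{i₁} + ⋯ + c_{i_k})). -/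
open scoped RealInnerProductSpace Classical BigOperators

noncomputable section

/-!
In the coordinates `n₀ = q - (α̃,x)`, `n_j = (α_j,x)`, the coweights in `q Ā^∘` are the
nonnegative integer solutions of `∑ c_i n_i = q`, and the facet `F_i` is `n_i = 0`. Avoiding the
facets indexed by `S` means `n_i ≥ 1` for `i ∈ S`; translating by the coweight `w` with
`(α_j, w) = 1` for `j ∈ S` and `0` otherwise lowers exactly these coordinates by one, which turns
them into the nonnegative solutions of `∑ c_i n_i = q - ∑_{i ∈ S} c_i`. The open alcove is the
case `S = {0, 1, …, ℓ}`.
-/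

theorem exists_forall_inner_basis_eq {ι E : Type*} [NormedAddCommGroup E]
    [InnerProductSpace ℝ E] [FiniteDimensional ℝ E] (b : Module.Basis ι ℝ E) (f : ι → ℝ) :
    ∃ x : E, ∀ i, ⟪b i, x⟫ = f i :=
  ⟨(InnerProductSpace.toDual ℝ E).symm (LinearMap.toContinuousLinearMap (b.constr ℝ f)),
    fun i => by rw [real_inner_comm, InnerProductSpace.toDual_symm_apply]; simp⟩

theorem exists_mem_eq_smul_iff {K E : Type*} [GroupWithZero K] [MulAction K E] {s : Set E} {r : K}
    (hr : r ≠ 0) {x : E} : (∃ y ∈ s, x = r • y) ↔ r⁻¹ • x ∈ s := by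
  simp_rw [eq_comm (a := x), ← Set.mem_smul_set, Set.mem_smul_set_iff_inv_smul_mem₀ hr]

namespace RootSystemData

variable {ℓ : ℕ} (R : RootSystemData ℓ)

theorem coe_simpleBasis : ⇑R.simpleBasis = R.simple :=
  coe_basisOfLinearIndependentOfCardEqFinrank' ..

theorem eq_zero_of_forall_inner_simple_eq_zero {x : V ℓ} (h : ∀ i, ⟪R.simple i, x⟫ = 0) :
    x = 0 :=
  InnerProductSpace.ext_inner_left_basis R.simpleBasis fun i => by simp [coe_simpleBasis, h]

theorem exists_forall_inner_simple_eq (f : Fin ℓ → ℝ) : ∃ w : V ℓ, ∀ i, ⟪R.simple i, w⟫ = f i := by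
  simpa [coe_simpleBasis] using exists_forall_inner_basis_eq R.simpleBasis f

theorem inner_highest (x : V ℓ) : ⟪R.highest, x⟫ = ∑ i, (R.c i : ℝ) * ⟪R.simple i, x⟫ := by
  simp [R.highest_eq, sum_inner, real_inner_smul_left]

def facetCoord (q : ℝ) (x : V ℓ) : Option (Fin ℓ) → ℝ
  | none => q - ⟪R.highest, x⟫
  | some j => ⟪R.simple j, x⟫

theorem sum_cExt_mul_facetCoord (q : ℝ) (x : V ℓ) :
    ∑ i, (R.cExt i : ℝ) * R.facetCoord q x i = q := by
  simp [Fintype.sum_option, cExt, facetCoord, R.inner_highest]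

theorem exists_facetCoord_eq_int {x : V ℓ} (hx : x ∈ R.coweightLat) (q : ℤ) (i : Option (Fin ℓ)) :
    ∃ n : ℤ, R.facetCoord q x i = n := by
  choose n hn using hx
  cases i with
  | none => exact ⟨q - ∑ j, R.c j * n j, by simp [facetCoord, R.inner_highest, hn]⟩
  | some j => exact ⟨n j, hn j⟩

theorem facetCoord_ne_zero_iff (q : ℝ) (x : V ℓ) (i : Option (Fin ℓ)) :
    R.facetCoord q x i ≠ 0 ↔
      Option.elim i (⟪R.highest, x⟫ ≠ q) (fun j => ⟪R.simple j, x⟫ ≠ 0) := by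
  cases i with
  | none => exact sub_ne_zero.trans ne_comm
  | some j => rfl

theorem eq_zero_of_forall_facetCoord_zero_nonneg {x : V ℓ} (hx : ∀ i, 0 ≤ R.facetCoord 0 x i) :
    x = 0 := by
  have hsum := R.sum_cExt_mul_facetCoord 0 x
  rw [Finset.sum_eq_zero_iff_of_nonneg fun i _ =>
    mul_nonneg (Nat.cast_nonneg _) (hx i)] at hsum
  refine R.eq_zero_of_forall_inner_simple_eq_zero fun j => ?_
  simpa [cExt, facetCoord, (R.c_pos j).ne'] using hsum (some j) (Finset.mem_univ _)

theorem exists_mem_alcC_eq_smul_iff {r : ℝ} (hr : 0 ≤ r) (x : V ℓ) :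
    (∃ y ∈ R.alcC, x = r • y) ↔ ∀ i, 0 ≤ R.facetCoord r x i := by
  rcases hr.eq_or_lt with rfl | hr
  · constructor
    · rintro ⟨y, -, rfl⟩ (_ | _) <;> simp [facetCoord]
    · intro hx
      exact ⟨0, ⟨fun i => by simp, by simp⟩,
        by simp [R.eq_zero_of_forall_facetCoord_zero_nonneg hx]⟩
  · rw [exists_mem_eq_smul_iff hr.ne']
    simp [alcC, Option.forall, facetCoord, real_inner_smul_right, inv_mul_le_iff₀ hr,
      mul_nonneg_iff_of_pos_left (inv_pos.2 hr), sub_nonneg, and_comm]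

theorem exists_mem_alc_eq_smul_iff {r : ℝ} (hr : 0 < r) (x : V ℓ) :
    (∃ y ∈ R.alc, x = r • y) ↔ ∀ i, 0 < R.facetCoord r x i := by
  rw [exists_mem_eq_smul_iff hr.ne']
  simp [alc, Option.forall, facetCoord, real_inner_smul_right, inv_mul_lt_iff₀ hr,
    mul_pos_iff_of_pos_left (inv_pos.2 hr), sub_pos, and_comm]

def insetPts (a : Option (Fin ℓ) → ℤ) (q : ℤ) : Set (V ℓ) :=
  {x | x ∈ R.coweightLat ∧ ∀ i, (a i : ℝ) ≤ R.facetCoord q x i}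

theorem ncard_insetPts (a : Option (Fin ℓ) → ℤ) (q : ℤ) :
    (R.insetPts a q).ncard = (R.insetPts 0 (q - ∑ i, R.cExt i * a i)).ncard := by
  obtain ⟨w, hw⟩ := R.exists_forall_inner_simple_eq fun j => a (some j)
  have hw_mem : w ∈ R.coweightLat := fun j => ⟨a (some j), hw j⟩
  have hcoord : ∀ x i, R.facetCoord ↑(q - ∑ i, R.cExt i * a i) (x - w) i =
      R.facetCoord q x i - a i := by
    rintro x (_ | j)
    · simp [facetCoord, inner_sub_right, R.inner_highest, hw, Fintype.sum_option, cExt, mul_sub,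
        Finset.sum_sub_distrib]
      ring
    · simp [facetCoord, inner_sub_right, hw]
  have hpre : R.insetPts a q = (· - w) ⁻¹' R.insetPts 0 (q - ∑ i, R.cExt i * a i) := by
    ext x
    simp only [insetPts, Set.mem_preimage, Set.mem_ofPred_eq, hcoord, Pi.zero_apply, Int.cast_zero,
      sub_nonneg]
    rw [sub_eq_add_neg, add_mem_cancel_right (R.coweightLat.neg_mem hw_mem)]
  rw [hpre, Set.ncard_preimage_of_injective_subset_range sub_left_injective
    fun y _ => ⟨y + w, add_sub_cancel_right y w⟩]

theorem ncard_insetPts_zero (r : ℤ) : (R.insetPts 0 r).ncard = R.LP R.alcC r := by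
  unfold LP
  split_ifs with hr
  · convert Set.ncard_empty (V ℓ)
    refine Set.eq_empty_of_forall_notMem fun x ⟨_, hx⟩ => ?_
    have hsum := R.sum_cExt_mul_facetCoord r x
    have : (0 : ℝ) ≤ r := hsum ▸ Finset.sum_nonneg fun i _ =>
      mul_nonneg (Nat.cast_nonneg _) (by simpa using hx i)
    exact absurd (mod_cast this : (0 : ℤ) ≤ r) (not_le.2 hr)
  · congr 1
    ext x
    simp [insetPts, R.exists_mem_alcC_eq_smul_iff (mod_cast not_lt.1 hr : (0 : ℝ) ≤ r)]

def facetAvoidingPts (S : Finset (Option (Fin ℓ))) (q : ℤ) : Set (V ℓ) :=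
  {x | x ∈ R.coweightLat ∧ (∃ y ∈ R.alcC, x = (q : ℝ) • y) ∧
    ∀ i ∈ S, Option.elim i (⟪R.highest, x⟫ ≠ (q : ℝ)) (fun j => ⟪R.simple j, x⟫ ≠ 0)}

theorem facetAvoidingPts_eq_insetPts (S : Finset (Option (Fin ℓ))) {q : ℤ} (hq : 0 ≤ q) :
    R.facetAvoidingPts S q = R.insetPts (fun i => if i ∈ S then 1 else 0) q := by
  ext x
  simp only [facetAvoidingPts, insetPts, Set.mem_ofPred_eq, ← R.facetCoord_ne_zero_iff,
    R.exists_mem_alcC_eq_smul_iff (mod_cast hq : (0 : ℝ) ≤ q)]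
  refine and_congr_right fun hx => ?_
  rw [← forall_and]
  refine forall_congr' fun i => ?_
  obtain ⟨n, hn⟩ := R.exists_facetCoord_eq_int hx q i
  rw [hn]
  split_ifs with hi <;> simp [hi]
  norm_cast
  omega

theorem ncard_facetAvoidingPts (S : Finset (Option (Fin ℓ))) {q : ℤ} (hq : 0 ≤ q) :
    (R.facetAvoidingPts S q).ncard = R.LP R.alcC (q - ∑ i ∈ S, (R.cExt i : ℤ)) := by
  rw [R.facetAvoidingPts_eq_insetPts S hq, ncard_insetPts, ncard_insetPts_zero]
  simp [Finset.sum_ite_mem]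

theorem LP_alc_eq_ncard_facetAvoidingPts_univ {q : ℤ} (hq : 0 < q) :
    R.LP R.alc q = (R.facetAvoidingPts Finset.univ q).ncard := by
  rw [LP, if_neg hq.not_gt]
  congr 1
  ext x
  simp only [facetAvoidingPts, Set.mem_ofPred_eq, ← R.facetCoord_ne_zero_iff,
    R.exists_mem_alc_eq_smul_iff (mod_cast hq : (0 : ℝ) < q),
    R.exists_mem_alcC_eq_smul_iff (mod_cast hq.le : (0 : ℝ) ≤ q)]
  simp [lt_iff_le_and_ne, forall_and, ne_comm]

end RootSystemData

/-- `L_{A^∘}(q) = L_{Ā^∘}(q - h)`, and more generally removing the facets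
indexed by a subset `S ⊆ {0,1,…,ℓ}` from `q Ā^∘` leaves `L_{Ā^∘}(q - ∑_{i ∈ S} c_i)`
coweight lattice points, provided `q > ∑_{i ∈ S} c_i`. -/
theorem ehrhart_alcove_facet_removal {ℓ : ℕ} (R : RootSystemData ℓ) :
    (∀ q : ℤ, 1 ≤ q → R.LP R.alc q = R.LP R.alcC (q - R.coxh)) ∧
    (∀ (S : Finset (Option (Fin ℓ))) (q : ℤ), (∑ i ∈ S, (R.cExt i : ℤ)) < q →
      Set.ncard {x : V ℓ | x ∈ R.coweightLat ∧ (∃ y ∈ R.alcC, x = (q : ℝ) • y) ∧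
          ∀ i ∈ S, Option.elim i (⟪R.highest, x⟫ ≠ (q : ℝ)) (fun j => ⟪R.simple j, x⟫ ≠ 0)} =
        R.LP R.alcC (q - ∑ i ∈ S, (R.cExt i : ℤ))) := by
  refine ⟨fun q hq => ?_, fun S q hq => R.ncard_facetAvoidingPts S ?_⟩
  · rw [R.LP_alc_eq_ncard_facetAvoidingPts_univ hq, R.ncard_facetAvoidingPts _ (by omega)]
    simp [RootSystemData.coxh]
  · exact (Finset.sum_nonneg fun i _ => Int.natCast_nonneg _).trans hq.le
end
end

section
/- For the root system Φ = G₂ with simple roots α₁ (short), α₂ (long) and positive roots {α₁, α₂, α₁+α₂, 2α₁+α₂, 3α₁+α₂, 3α₁+2α₂}, the number of pairs (z₁, z₂) ∈ (ℤ/qℤ)² such that z₁, z₂, z₁+z₂, 2z₁+z₂, 3z₁+z₂ are all nonzero in ℤ/qℤ equals: (q−1)(q−4) if q ≡ 1,5 mod 6; (q−2)(q−3) if q ≡ 2,3,4 mod 6; q² − 5q + 8 if q ≡ 0 mod 6. -/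
/-!
For `z₁ = x ≠ 0` the admissible `z₂` are the points outside `{0, -x, -2x, -3x}`, a set of
`min (addOrderOf x) 4` elements. So every nonzero `x` contributes `q - 4`, except those of order
`2` or `3`, which contribute `q - 2` and `q - 3`. In the cyclic group `ℤ/qℤ` there are `φ d`
elements of order `d` when `d ∣ q` and none otherwise, which gives the quasi-polynomial
`(q - 1)(q - 4) + 2·[2 ∣ q] + 2·[3 ∣ q]`.
-/

open Finset

theorem card_image_nsmul_range {G : Type*} [AddMonoid G] [DecidableEq G] {a : G}
    (ha : IsOfFinAddOrder a) (n : ℕ) :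
    ((range n).image (· • a)).card = min (addOrderOf a) n := by
  have hsame : (range n).image (· • a) = (range (min (addOrderOf a) n)).image (· • a) := by
    refine Subset.antisymm (fun x hx => ?_)
      (image_subset_image (range_subset_range.2 (min_le_right _ _)))
    obtain ⟨k, hk, rfl⟩ := mem_image.1 hx
    have hmod : k % addOrderOf a < addOrderOf a := Nat.mod_lt _ ha.addOrderOf_pos
    refine mem_image.2 ⟨k % addOrderOf a, ?_, mod_addOrderOf_nsmul a k⟩
    simp only [mem_range] at hk ⊢
    exact lt_min hmod ((Nat.mod_le _ _).trans_lt hk)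
  rw [hsame, card_image_of_injOn, card_range]
  exact nsmul_injOn_Iio_addOrderOf.mono fun k hk => (mem_range.1 hk).trans_le (min_le_left _ _)

section FiniteAddGroup

variable {G : Type*} [AddGroup G] [Fintype G]

theorem IsAddCyclic.card_addOrderOf_eq [IsAddCyclic G] (d : ℕ) :
    #{x : G | addOrderOf x = d} = if d ∣ Fintype.card G then d.totient else 0 := by
  split_ifs with hd
  · exact IsAddCyclic.card_addOrderOf_eq_totient hd
  · rw [card_eq_zero, filter_eq_empty_iff]
    rintro x - rfl
    exact hd addOrderOf_dvd_card

variable [DecidableEq G]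

theorem card_filter_nsmul_add_ne_zero (x : G) (n : ℕ) :
    #{y | ∀ k < n, k • x + y ≠ 0} = Fintype.card G - min (addOrderOf x) n := by
  have hcompl : ({y | ∀ k < n, k • x + y ≠ 0} : Finset G) =
      (((range n).image (· • x)).image (-·))ᶜ := by
    ext y
    simp [add_eq_zero_iff_eq_neg', eq_comm]
  rw [hcompl, card_compl, card_image_of_injective _ neg_injective,
    card_image_nsmul_range (isOfFinAddOrder_of_finite x)]

theorem card_pairs_ne_zero_nsmul_add_ne_zero (n : ℕ) :
    Nat.card {z : G × G // z.1 ≠ 0 ∧ ∀ k < n, k • z.1 + z.2 ≠ 0} =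
      ∑ x : G, if x ≠ 0 then Fintype.card G - min (addOrderOf x) n else 0 := by
  rw [Nat.card_eq_fintype_card, Fintype.card_subtype, card_filter, Fintype.sum_prod_type]
  refine sum_congr rfl fun x _ => ?_
  split_ifs with hx
  · rw [← card_filter_nsmul_add_ne_zero, card_filter]
    simp [hx]
  · simp [hx]

theorem natCast_ite_card_sub_min_addOrderOf_four (x : G) :
    (((if x ≠ 0 then Fintype.card G - min (addOrderOf x) 4 else 0 : ℕ)) : ℤ) =
      (Fintype.card G - 4) + (4 - Fintype.card G) * (if addOrderOf x = 1 then 1 else 0) +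
        2 * (if addOrderOf x = 2 then 1 else 0) + (if addOrderOf x = 3 then 1 else 0) := by
  have hpos : 0 < addOrderOf x := addOrderOf_pos x
  have hle : addOrderOf x ≤ Fintype.card G := addOrderOf_le_card_univ
  by_cases hx : x = 0
  · simp [hx]
  · have hne : addOrderOf x ≠ 1 := fun h => hx (AddMonoid.addOrderOf_eq_one_iff.1 h)
    simp only [ne_eq, hx, not_false_eq_true, if_true, hne, if_false]
    split_ifs <;> omega

theorem IsAddCyclic.card_pairs_ne_zero_nsmul_add_ne_zero_four [IsAddCyclic G] :
    (Nat.card {z : G × G // z.1 ≠ 0 ∧ ∀ k < 4, k • z.1 + z.2 ≠ 0} : ℤ) =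
      (Fintype.card G - 1) * (Fintype.card G - 4) +
        (if 2 ∣ Fintype.card G then 2 else 0) + (if 3 ∣ Fintype.card G then 2 else 0) := by
  rw [card_pairs_ne_zero_nsmul_add_ne_zero, Nat.cast_sum]
  simp only [natCast_ite_card_sub_min_addOrderOf_four, sum_add_distrib, ← mul_sum, sum_const,
    card_univ, sum_boole, IsAddCyclic.card_addOrderOf_eq]
  have htotient_three : Nat.totient 3 = 2 := Nat.totient_prime Nat.prime_three
  simp only [one_dvd, if_true, Nat.totient_one, Nat.totient_two, htotient_three]
  split_ifs <;> push_cast <;> ring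

end FiniteAddGroup

/-- for `Ψ = Φ⁺(G₂) \ {3α₁+2α₂}`, the number of pairs `(z₁, z₂) ∈ (ℤ/qℤ)²` with
`z₁, z₂, z₁+z₂, 2z₁+z₂, 3z₁+z₂` all nonzero is `(q-1)(q-4)` if `q ≡ 1,5 mod 6`,
`(q-2)(q-3)` if `q ≡ 2,3,4 mod 6`, and `q² - 5q + 8` if `q ≡ 0 mod 6`. -/
theorem char_quasipoly_G2_minus_highest (q : ℕ) (hq : 0 < q) :
    (Nat.card {z : ZMod q × ZMod q //
        z.1 ≠ 0 ∧ z.2 ≠ 0 ∧ z.1 + z.2 ≠ 0 ∧ 2 * z.1 + z.2 ≠ 0 ∧ 3 * z.1 + z.2 ≠ 0} : ℤ) =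
      if q % 6 = 1 ∨ q % 6 = 5 then ((q : ℤ) - 1) * ((q : ℤ) - 4)
      else if q % 6 = 0 then (q : ℤ) ^ 2 - 5 * q + 8
      else ((q : ℤ) - 2) * ((q : ℤ) - 3) := by
  have : NeZero q := ⟨hq.ne'⟩
  have hforms : ∀ z : ZMod q × ZMod q,
      (z.1 ≠ 0 ∧ z.2 ≠ 0 ∧ z.1 + z.2 ≠ 0 ∧ 2 * z.1 + z.2 ≠ 0 ∧ 3 * z.1 + z.2 ≠ 0) ↔
        z.1 ≠ 0 ∧ ∀ k < 4, k • z.1 + z.2 ≠ 0 := by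
    simp only [Nat.forall_lt_succ_left, Nat.not_lt_zero, IsEmpty.forall_iff, forall_const,
      and_true, nsmul_eq_mul]
    norm_num
  rw [Nat.card_congr (Equiv.subtypeEquivRight hforms),
    IsAddCyclic.card_pairs_ne_zero_nsmul_add_ne_zero_four, ZMod.card]
  have h2 : q % 2 = q % 6 % 2 := (Nat.mod_mod_of_dvd q (by norm_num)).symm
  have h3 : q % 3 = q % 6 % 3 := (Nat.mod_mod_of_dvd q (by norm_num)).symm
  have h6 : q % 6 < 6 := Nat.mod_lt _ (by norm_num)
  simp only [Nat.dvd_iff_mod_eq_zero, h2, h3]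
  interval_cases q % 6 <;> norm_num <;> ring
end

section
/- Let Φ = G₂ and Ψ = Φ⁺ \ {3α₁+2α₂} (removing the highest root). Then for all positive integers q, the characteristic quasi-polynomial χ^quasi_Ψ(q) (counting (z₁,z₂) ∈ (ℤ/q)² with z₁, z₂, z₁+z₂, 2z₁+z₂, 3z₁+z₂ all nonzero) satisfies χ^quasi_Ψ(q) = 8·L_{Ā}(q−6) + 2·L_{Ā}(q−5) + 2·L_{Ā}(q−4), where L_{Ā}(q) = #{(m,n) ∈ ℤ²_{≥0} : 3m+2n ≤ q} for q ≥ 0 and L_{Ā}(q) = 0 for q < 0 interpreted via the quasi-polynomial extension (in particular the identity holds for all q ≥ 6). -/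
/-!
For `z₁ = a ≠ 0` the admissible `z₂` are the elements outside `{0, -a, -2a, -3a}`, a set with
four elements unless `2a = 0` (two elements) or `3a = 0` (three). Counting the nonzero
`a ∈ ℤ/q` killed by `2` or by `3` gives
`χ(q) = (q - 1)(q - 4) + 2·[2 ∣ q] + 2·[3 ∣ q]`.
On the alcove side, removing the column `m = 0` gives `L(n + 3) = L(n) + ⌊(n + 3)/2⌋ + 1`,
and an induction in steps of `3` shows that `8 L(q-6) + 2 L(q-5) + 2 L(q-4)` is the same
quasi-polynomial.
-/

open Finset Pointwise

/-- The lattice point counting function `L_{Ā}(q) = #{(m,n) ∈ ℤ²_{≥0} : 3m + 2n ≤ q}` of the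
closed fundamental alcove of `G₂` with respect to the coweight lattice. -/
def LalcG2 (q : ℕ) : ℕ :=
  ((Finset.range (q + 1) ×ˢ Finset.range (q + 1)).filter
    (fun p => 3 * p.1 + 2 * p.2 ≤ q)).card

theorem LalcG2_add_three (n : ℕ) : LalcG2 (n + 3) = LalcG2 n + ((n + 3) / 2 + 1) := by
  unfold LalcG2
  rw [← card_filter_add_card_filter_not (fun p : ℕ × ℕ => p.1 ≠ 0), filter_filter,
    filter_filter]
  congr 1
  · refine card_nbij' (fun p => (p.1 - 1, p.2)) (fun p => (p.1 + 1, p.2)) ?_ ?_ ?_ ?_ <;>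
      simp only [Set.MapsTo, Set.LeftInvOn, coe_filter, mem_product, mem_range,
        Set.mem_ofPred_eq, Prod.forall, Prod.mk.injEq, and_true] <;> intros <;> omega
  · rw [← card_range ((n + 3) / 2 + 1)]
    refine card_nbij' (·.2) (fun k => (0, k)) ?_ ?_ ?_ ?_ <;>
      simp only [Set.MapsTo, Set.LeftInvOn, coe_filter, coe_range, mem_product, mem_range,
        Set.mem_ofPred_eq, Set.mem_Iio, Prod.forall, Prod.mk.injEq, and_true,
        implies_true] <;> intros <;> omega

theorem eulerian_combination_LalcG2 (n : ℕ) :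
    8 * LalcG2 n + 2 * LalcG2 (n + 1) + 2 * LalcG2 (n + 2) =
      (n + 5) * (n + 2) + (if 2 ∣ n then 2 else 0) + (if 3 ∣ n then 2 else 0) := by
  induction n using Nat.strong_induction_on with
  | _ n ih =>
    obtain hn | ⟨m, rfl⟩ : n < 3 ∨ ∃ m, n = m + 3 :=
      (lt_or_ge n 3).imp_right fun h => ⟨n - 3, by omega⟩
    · interval_cases n <;> decide
    · have ihm := ih m (by omega)
      rw [show m + 3 + 1 = m + 1 + 3 by ring, show m + 3 + 2 = m + 2 + 3 by ring,
        LalcG2_add_three, LalcG2_add_three, LalcG2_add_three,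
        show (m + 3 + 5) * (m + 3 + 2) = (m + 5) * (m + 2) + 6 * (m + 5) by ring]
      generalize (m + 5) * (m + 2) = P at ihm ⊢
      split_ifs at ihm ⊢ <;> omega

section CommRing

variable {R : Type*} [CommRing R] [DecidableEq R]

theorem card_multiples_add_torsion {a : R} (ha : a ≠ 0) :
    #{0, a, 2 * a, 3 * a} + (if 2 * a = 0 then 2 else 0) + (if 3 * a = 0 then 1 else 0) = 4 := by
  have h12 : a ≠ 2 * a := fun h => ha (by linear_combination -h)
  have h23 : 2 * a ≠ 3 * a := fun h => ha (by linear_combination -h)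
  by_cases h2 : 2 * a = 0
  · have h3 : 3 * a = a := by linear_combination h2
    simp [h2, h3, ha, Ne.symm ha]
  · by_cases h3 : 3 * a = 0
    · simp [h2, h3, ha, Ne.symm ha, h12, Ne.symm h2]
    · have h13 : a ≠ 3 * a := fun h => h2 (by linear_combination -h)
      simp [h2, h3, Ne.symm ha, h12, h13, h23, Ne.symm h2, Ne.symm h3]

variable [Fintype R]

theorem card_avoiding_neg_multiples {a : R} (ha : a ≠ 0) :
    #{b | b ≠ 0 ∧ a + b ≠ 0 ∧ 2 * a + b ≠ 0 ∧ 3 * a + b ≠ 0} + 4 =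
      Fintype.card R + (if 2 * a = 0 then 2 else 0) + (if 3 * a = 0 then 1 else 0) := by
  have hfilter : ({b | b ≠ 0 ∧ a + b ≠ 0 ∧ 2 * a + b ≠ 0 ∧ 3 * a + b ≠ 0} : Finset R) =
      univ \ -{0, a, 2 * a, 3 * a} := by
    ext b
    simp only [mem_filter, mem_univ, true_and, mem_sdiff, mem_neg', mem_insert, mem_singleton,
      neg_eq_iff_add_eq_zero, not_or, add_comm b, zero_add, ne_eq]
  rw [hfilter, card_sdiff_of_subset (subset_univ _), card_univ, card_neg,
    ← card_multiples_add_torsion ha]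
  have := card_le_univ ({0, a, 2 * a, 3 * a} : Finset R)
  omega

theorem sum_erase_zero_ite (P : R → Prop) [DecidablePred P] (c : ℕ) :
    ∑ a ∈ univ.erase 0, (if P a then c else 0) = c * #{a : R | a ≠ 0 ∧ P a} := by
  rw [← sum_filter, sum_const, smul_eq_mul, mul_comm]
  congr 2
  ext a
  simp [and_comm]

theorem card_G2_complement_add :
    Nat.card {z : R × R //
        z.1 ≠ 0 ∧ z.2 ≠ 0 ∧ z.1 + z.2 ≠ 0 ∧ 2 * z.1 + z.2 ≠ 0 ∧ 3 * z.1 + z.2 ≠ 0} +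
      4 * (Fintype.card R - 1) =
    (Fintype.card R - 1) * Fintype.card R + 2 * #{a : R | a ≠ 0 ∧ 2 * a = 0} +
      #{a : R | a ≠ 0 ∧ 3 * a = 0} := by
  have hfiber : Nat.card {z : R × R //
        z.1 ≠ 0 ∧ z.2 ≠ 0 ∧ z.1 + z.2 ≠ 0 ∧ 2 * z.1 + z.2 ≠ 0 ∧ 3 * z.1 + z.2 ≠ 0} =
      ∑ a ∈ univ.erase 0, #{b : R | b ≠ 0 ∧ a + b ≠ 0 ∧ 2 * a + b ≠ 0 ∧ 3 * a + b ≠ 0} := by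
    rw [Nat.card_eq_fintype_card, Fintype.card_subtype, card_filter, Fintype.sum_prod_type,
      ← sum_erase univ (a := 0) (by simp)]
    refine sum_congr rfl fun a ha => ?_
    rw [card_filter]
    simp only [ne_eq, (mem_erase.1 ha).1, not_false_eq_true, true_and]
  calc _ = ∑ a ∈ univ.erase 0,
        (#{b : R | b ≠ 0 ∧ a + b ≠ 0 ∧ 2 * a + b ≠ 0 ∧ 3 * a + b ≠ 0} + 4) := by
        rw [hfiber, sum_add_distrib, sum_const, card_erase_of_mem (mem_univ _), card_univ,
          smul_eq_mul, mul_comm]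
    _ = ∑ a ∈ univ.erase 0,
        (Fintype.card R + (if 2 * a = 0 then 2 else 0) + (if 3 * a = 0 then 1 else 0)) :=
        sum_congr rfl fun a ha => card_avoiding_neg_multiples (mem_erase.1 ha).1
    _ = _ := by
        rw [sum_add_distrib, sum_add_distrib, sum_const, card_erase_of_mem (mem_univ _),
          card_univ, smul_eq_mul, sum_erase_zero_ite, sum_erase_zero_ite, one_mul]

end CommRing

theorem ZMod.card_filter_mul_eq_zero (q k : ℕ) [NeZero q] :
    #{a : ZMod q | (k : ZMod q) * a = 0} = q.gcd k := by
  have hker := IsAddCyclic.card_nsmulAddMonoidHom_ker (ZMod q) k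
  rw [Nat.card_zmod] at hker
  rw [← hker, Nat.card_eq_fintype_card, ← Fintype.card_subtype]
  simp only [AddMonoidHom.mem_ker, nsmulAddMonoidHom_apply, nsmul_eq_mul]

theorem ZMod.card_filter_ne_zero_mul_eq_zero {q p : ℕ} [NeZero q] (hp : p.Prime) :
    #{a : ZMod q | a ≠ 0 ∧ (p : ZMod q) * a = 0} = if p ∣ q then p - 1 else 0 := by
  have hfilter : ({a | a ≠ 0 ∧ (p : ZMod q) * a = 0} : Finset (ZMod q)) =
      ({a | (p : ZMod q) * a = 0} : Finset (ZMod q)).erase 0 := by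
    ext a; simp [and_comm]
  rw [hfilter, card_erase_of_mem (by simp), ZMod.card_filter_mul_eq_zero]
  split_ifs with h
  · rw [Nat.gcd_eq_right h]
  · rw [((Nat.Prime.coprime_iff_not_dvd hp).2 h).symm.gcd_eq_one]

/-- for `Ψ = Φ⁺(G₂) \ {3α₁+2α₂}` and all `q ≥ 6` (so that all arguments of
`L_{Ā}` are nonnegative), `χ^quasi_Ψ(q) = 8·L_{Ā}(q-6) + 2·L_{Ā}(q-5) + 2·L_{Ā}(q-4)`,
reflecting the `A`-Eulerian polynomial `E_Ψ(t) = 8t⁶ + 2t⁵ + 2t⁴`. -/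
theorem char_quasipoly_G2_eulerian_shift (q : ℕ) (hq : 6 ≤ q) :
    Nat.card {z : ZMod q × ZMod q //
        z.1 ≠ 0 ∧ z.2 ≠ 0 ∧ z.1 + z.2 ≠ 0 ∧ 2 * z.1 + z.2 ≠ 0 ∧ 3 * z.1 + z.2 ≠ 0} =
      8 * LalcG2 (q - 6) + 2 * LalcG2 (q - 5) + 2 * LalcG2 (q - 4) := by
  obtain ⟨n, rfl⟩ : ∃ n, q = n + 6 := ⟨q - 6, by omega⟩
  have hχ := card_G2_complement_add (R := ZMod (n + 6))
  have h2 := ZMod.card_filter_ne_zero_mul_eq_zero (q := n + 6) Nat.prime_two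
  have h3 := ZMod.card_filter_ne_zero_mul_eq_zero (q := n + 6) Nat.prime_three
  push_cast at h2 h3
  rw [h2, h3, ZMod.card] at hχ
  rw [show n + 6 - 6 = n by omega, show n + 6 - 5 = n + 1 by omega,
    show n + 6 - 4 = n + 2 by omega, eulerian_combination_LalcG2,
    ← Nat.add_right_cancel_iff (n := 4 * (n + 6 - 1)), hχ,
    show (n + 6 - 1) * (n + 6) = (n + 5) * (n + 2) + 4 * (n + 5) by
      rw [Nat.add_sub_assoc (by norm_num)]; ring]
  split_ifs at * <;> omega
end

section
/- Let Φ be an irreducible root system with positive system Φ⁺ of rank ℓ ≥ 1, and let δ ∈ Φ⁺. Then the subset Ψ = Φ⁺ \ {δ} is compatible with the Worpitzky partition. Concretely: if A_i^◊ ∩ H_{α,m} (α ∈ Ψ, m ∈ ℤ) is a nonempty face but not a facet of a partially closed alcove A_i^◊, then it equals an intersection ∩_{j=1}^n H_{β_j, m_j} ∩ A_i^◊ of n ≥ 2 facet supporting hyperplanes (β_j ∈ Φ⁺), hence at least one β_k ≠ δ lies in Ψ and supports a facet containing the face. -/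
open scoped RealInnerProductSpace Classical BigOperators

noncomputable section

/-!
An alcove is an open box `k β < ⟪β, ·⟫ < k β + 1` (`β ∈ Φ⁺`), its closure the closed box and its
partial closure `A^◊` the half-open box. Fix an irredundant subsystem of the closed-box inequalities
and a relative interior point `x₀` of the face `A^◊ ∩ H_{α,m}`, where `⟪α, ·⟫` is maximal. If no
irredundant wall other than one of `δ` were tight at `x₀`, the closed box would near `x₀` be the
half-space `⟪δ, ·⟫ ≤ ⟪δ, x₀⟫`, forcing `α ∈ ℝ δ`, i.e. `α = δ`. So a tight irredundant upper wall
`H_{β, k β + 1}`, `β ≠ δ`, contains the face. Irredundancy yields a point of that wall at which all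
other inequalities are strict; near it the wall lies in `A^◊` (a lower wall of a root not
parallel to `β` cannot contain a relatively open piece of it), so the wall supports a facet.
-/

section Polyhedron

variable {E : Type*} [NormedAddCommGroup E] [InnerProductSpace ℝ E]

def polyhedron (I : Finset (E × ℝ)) : Set E := {y | ∀ p ∈ I, ⟪p.1, y⟫ ≤ p.2}

def openPolyhedron (I : Finset (E × ℝ)) : Set E := {y | ∀ p ∈ I, ⟪p.1, y⟫ < p.2}

lemma polyhedron_anti {I J : Finset (E × ℝ)} (h : I ⊆ J) : polyhedron J ⊆ polyhedron I :=
  fun _ hy p hp => hy p (h hp)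

lemma openPolyhedron_anti {I J : Finset (E × ℝ)} (h : I ⊆ J) :
    openPolyhedron J ⊆ openPolyhedron I :=
  fun _ hy p hp => hy p (h hp)

lemma openPolyhedron_subset_polyhedron (I : Finset (E × ℝ)) :
    openPolyhedron I ⊆ polyhedron I :=
  fun _ hy p hp => (hy p hp).le

lemma isClosed_polyhedron (I : Finset (E × ℝ)) : IsClosed (polyhedron I) := by
  simp only [polyhedron, Set.ofPred_forall]
  exact isClosed_biInter fun p _ => isClosed_le (continuous_const.inner continuous_id)
    continuous_const

lemma isOpen_openPolyhedron (I : Finset (E × ℝ)) : IsOpen (openPolyhedron I) := by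
  simp only [openPolyhedron, Set.ofPred_forall]
  exact isOpen_biInter_finset fun p _ => isOpen_lt (continuous_const.inner continuous_id)
    continuous_const

lemma inner_add_smul_lt {u x y : E} {r a b : ℝ} (hx : ⟪u, x⟫ < r) (hy : ⟪u, y⟫ ≤ r)
    (ha : 0 < a) (hb : 0 ≤ b) (hab : a + b = 1) : ⟪u, a • x + b • y⟫ < r := by
  rw [inner_add_right, real_inner_smul_right, real_inner_smul_right]
  have hr : a * r + b * r = r := by rw [← add_mul, hab, one_mul]
  linarith [mul_lt_mul_of_pos_left hx ha, mul_le_mul_of_nonneg_left hy hb]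

lemma convex_openPolyhedron (I : Finset (E × ℝ)) : Convex ℝ (openPolyhedron I) := by
  intro _ hx _ hy a b ha hb hab p hp
  rcases ha.lt_or_eq with ha | rfl
  · exact inner_add_smul_lt (hx p hp) (hy p hp).le ha hb hab
  · rw [zero_add] at hab
    subst hab
    simpa using hy p hp

lemma closure_openPolyhedron {I : Finset (E × ℝ)} {x : E} (hx : x ∈ openPolyhedron I) :
    closure (openPolyhedron I) = polyhedron I := by
  refine (closure_minimal (openPolyhedron_subset_polyhedron I) (isClosed_polyhedron I)).antisymm
    fun y hy => ?_
  have hseg : openSegment ℝ x y ⊆ openPolyhedron I := by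
    rintro _ ⟨a, b, ha, hb, hab, rfl⟩ p hp
    exact inner_add_smul_lt (hx p hp) (hy p hp) ha hb.le hab
  exact closure_mono hseg (segment_subset_closure_openSegment (right_mem_segment ℝ x y))

lemma exists_irredundant_subset [DecidableEq E] (I : Finset (E × ℝ)) :
    ∃ J ⊆ I, polyhedron J = polyhedron I ∧ ∀ j ∈ J, polyhedron (J.erase j) ≠ polyhedron J := by
  obtain ⟨J, hJ, hmin⟩ := Finset.exists_min_image
    (I.powerset.filter fun J => polyhedron J = polyhedron I) Finset.card ⟨I, by simp⟩
  rw [Finset.mem_filter, Finset.mem_powerset] at hJ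
  refine ⟨J, hJ.1, hJ.2, fun j hj heq => ?_⟩
  have := hmin (J.erase j) (by simp [(J.erase_subset j).trans hJ.1, heq, hJ.2])
  exact (Finset.card_erase_lt_of_mem hj).not_ge this

lemma exists_inner_eq_of_irredundant [DecidableEq E] {I : Finset (E × ℝ)} {x : E}
    (hx : x ∈ openPolyhedron I) {j : E × ℝ} (hj : j ∈ I)
    (hirr : polyhedron (I.erase j) ≠ polyhedron I) :
    ∃ z ∈ openPolyhedron (I.erase j), ⟪j.1, z⟫ = j.2 := by
  obtain ⟨y, hy, hyI⟩ : ∃ y ∈ polyhedron (I.erase j), y ∉ polyhedron I :=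
    Set.not_subset.1 fun h => hirr (h.antisymm (polyhedron_anti (I.erase_subset j)))
  have hyj : j.2 < ⟪j.1, y⟫ := by
    by_contra! hle
    refine hyI fun p hp => ?_
    rcases eq_or_ne p j with rfl | hpj
    · exact hle
    · exact hy p (Finset.mem_erase.2 ⟨hpj, hp⟩)
  have hxj := hx j hj
  set t := (j.2 - ⟪j.1, x⟫) / (⟪j.1, y⟫ - ⟪j.1, x⟫)
  have hd : 0 < ⟪j.1, y⟫ - ⟪j.1, x⟫ := by linarith
  have ht0 : 0 < t := div_pos (by linarith) hd
  have ht1 : t < 1 := (div_lt_one hd).2 (by linarith)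
  refine ⟨(1 - t) • x + t • y, fun p hp => ?_, ?_⟩
  · exact inner_add_smul_lt (hx p (Finset.mem_of_mem_erase hp)) (hy p hp) (by linarith)
      ht0.le (by ring)
  · rw [inner_add_right, real_inner_smul_right, real_inner_smul_right]
    have : t * (⟪j.1, y⟫ - ⟪j.1, x⟫) = j.2 - ⟪j.1, x⟫ := div_mul_cancel₀ _ hd.ne'
    linarith

lemma exists_forall_inner_eq_of_inner_eq {F : Set E} (hF : Convex ℝ F) (hne : F.Nonempty)
    (P : Finset E) (b : E → ℝ) (hFb : ∀ y ∈ F, ∀ β ∈ P, ⟪β, y⟫ ≤ b β) :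
    ∃ x₀ ∈ F, ∀ β ∈ P, ⟪β, x₀⟫ = b β → ∀ y ∈ F, ⟪β, y⟫ = b β := by
  induction P using Finset.induction_on with
  | empty =>
    obtain ⟨x, hx⟩ := hne
    exact ⟨x, hx, by simp⟩
  | insert β P hβP ih =>
    obtain ⟨x₀, hx₀, hx₀P⟩ :=
      ih fun y hy γ hγ => hFb y hy γ (Finset.mem_insert_of_mem hγ)
    by_cases hβ : ∀ y ∈ F, ⟪β, y⟫ = b β
    · refine ⟨x₀, hx₀, fun γ hγ => ?_⟩
      rcases Finset.mem_insert.1 hγ with rfl | hγ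
      · exact fun _ => hβ
      · exact hx₀P γ hγ
    push Not at hβ
    obtain ⟨y, hy, hyβ⟩ := hβ
    have hyβ' : ⟪β, y⟫ < b β := (hFb y hy β (Finset.mem_insert_self β P)).lt_of_ne hyβ
    refine ⟨(1 / 2 : ℝ) • y + (1 / 2 : ℝ) • x₀, hF hy hx₀ (by norm_num) (by norm_num)
      (by norm_num), fun γ hγ hmid => ?_⟩
    rw [inner_add_right, real_inner_smul_right, real_inner_smul_right] at hmid
    rcases Finset.mem_insert.1 hγ with rfl | hγ
    · linarith [hFb x₀ hx₀ γ hγ]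
    · refine hx₀P γ hγ ?_
      linarith [hFb x₀ hx₀ γ (Finset.mem_insert_of_mem hγ),
        hFb y hy γ (Finset.mem_insert_of_mem hγ)]

end Polyhedron

section Orthogonal

open Filter Topology

variable {E : Type*} [NormedAddCommGroup E] [InnerProductSpace ℝ E]

lemma exists_inner_eq_zero_inner_pos {β γ : E} (hγ : γ ∉ ℝ ∙ β) :
    ∃ p, ⟪β, p⟫ = 0 ∧ 0 < ⟪γ, p⟫ := by
  set K := (ℝ ∙ β)ᗮ
  have hpK : K.starProjection γ ∈ K := K.starProjection_apply_mem γ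
  have hp0 : K.starProjection γ ≠ 0 := by
    rwa [Ne, Submodule.starProjection_apply_eq_zero_iff, Submodule.orthogonal_orthogonal]
  refine ⟨K.starProjection γ, Submodule.mem_orthogonal_singleton_iff_inner_right.1 hpK, ?_⟩
  rw [← Submodule.starProjection_eq_self_iff.2 hpK, ← Submodule.inner_starProjection_left_eq_right]
  exact real_inner_self_pos.2 hp0

lemma exists_pos_add_smul_mem {U : Set E} {y : E} (hU : U ∈ 𝓝 y) (v : E) :
    ∃ t : ℝ, 0 < t ∧ y + t • v ∈ U := by
  have hT : Tendsto (fun t : ℝ => y + t • v) (𝓝 0) (𝓝 y) := by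
    simpa using ((continuous_id.smul continuous_const).const_add y).tendsto (0 : ℝ)
  have h : ∀ᶠ t in 𝓝[>] (0 : ℝ), y + t • v ∈ U := nhdsWithin_le_nhds (hT hU)
  obtain ⟨t, ht, ht0⟩ := (h.and self_mem_nhdsWithin).exists
  exact ⟨t, ht0, ht⟩

lemma lt_inner_of_le_on_hyperplane {U : Set E} {β γ y : E} {b c : ℝ} (hU : U ∈ 𝓝 y)
    (hy : ⟪β, y⟫ = b) (hUc : ∀ z ∈ U, ⟪β, z⟫ = b → c ≤ ⟪γ, z⟫) (hγ : γ ∉ ℝ ∙ β) :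
    c < ⟪γ, y⟫ := by
  obtain ⟨p, hβp, hγp⟩ := exists_inner_eq_zero_inner_pos hγ
  obtain ⟨t, ht, hmem⟩ := exists_pos_add_smul_mem hU (-p)
  have h := hUc _ hmem (by rw [inner_add_right, real_inner_smul_right, inner_neg_right, hβp,
    neg_zero, mul_zero, add_zero, hy])
  rw [inner_add_right, real_inner_smul_right, inner_neg_right] at h
  nlinarith

lemma vectorSpan_eq_orthogonal_of_nhds {S U : Set E} {β y : E} {b : ℝ}
    (hS : ∀ z ∈ S, ⟪β, z⟫ = b) (hU : U ∈ 𝓝 y) (hy : ⟪β, y⟫ = b)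
    (hUS : ∀ z ∈ U, ⟪β, z⟫ = b → z ∈ S) : vectorSpan ℝ S = (ℝ ∙ β)ᗮ := by
  refine le_antisymm ?_ fun w hw => ?_
  · rw [vectorSpan_def, Submodule.span_le]
    rintro _ ⟨z, hz, z', hz', rfl⟩
    simp only [SetLike.mem_coe, Submodule.mem_orthogonal_singleton_iff_inner_right, vsub_eq_sub,
      inner_sub_right, hS z hz, hS z' hz', sub_self]
  · have hβw := Submodule.mem_orthogonal_singleton_iff_inner_right.1 hw
    obtain ⟨t, ht, hmem⟩ := exists_pos_add_smul_mem hU w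
    have hline : ⟪β, y + t • w⟫ = b := by
      rw [inner_add_right, real_inner_smul_right, hβw, mul_zero, add_zero, hy]
    have h := vsub_mem_vectorSpan ℝ (hUS _ hmem hline) (hUS y (mem_of_mem_nhds hU) hy)
    rw [vsub_eq_sub, add_sub_cancel_left] at h
    simpa [ht.ne'] using Submodule.smul_mem _ t⁻¹ h

lemma exists_inner_eq_of_isMaxOn {I : Finset (E × ℝ)} {α δ x₀ : E} (hx₀ : x₀ ∈ polyhedron I)
    (hmax : IsMaxOn (fun y => ⟪α, y⟫) (polyhedron I) x₀) (hα : α ∉ ℝ ∙ δ) :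
    ∃ p ∈ I, p.1 ≠ δ ∧ ⟪p.1, x₀⟫ = p.2 := by
  by_contra! h
  obtain ⟨q, hδq, hαq⟩ := exists_inner_eq_zero_inner_pos hα
  set J := I.filter (·.1 ≠ δ)
  have hJ : x₀ ∈ openPolyhedron J := fun p hp => by
    rw [Finset.mem_filter] at hp
    exact (hx₀ p hp.1).lt_of_ne (h p hp.1 hp.2)
  obtain ⟨t, ht, hmem⟩ := exists_pos_add_smul_mem ((isOpen_openPolyhedron J).mem_nhds hJ) q
  have hmemI : x₀ + t • q ∈ polyhedron I := fun p hp => by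
    by_cases hpδ : p.1 = δ
    · rw [inner_add_right, real_inner_smul_right, hpδ, hδq, mul_zero, add_zero, ← hpδ]
      exact hx₀ p hp
    · exact (hmem p (Finset.mem_filter.2 ⟨hp, hpδ⟩)).le
  have hle : ⟪α, x₀ + t • q⟫ ≤ ⟪α, x₀⟫ := isMaxOn_iff.1 hmax _ hmemI
  rw [inner_add_right, real_inner_smul_right] at hle
  nlinarith

lemma finrank_orthogonal_span_singleton_eq_sub_one [FiniteDimensional ℝ E] {β : E}
    (hβ : β ≠ 0) : Module.finrank ℝ (ℝ ∙ β)ᗮ = Module.finrank ℝ E - 1 := by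
  have h₁ := finrank_span_singleton (K := ℝ) hβ
  have h₂ := Submodule.finrank_add_finrank_orthogonal (ℝ ∙ β)
  omega

end Orthogonal

lemma Int.eq_add_one_of_cast_lt_of_le {k m : ℤ} (h₁ : (k : ℝ) < m) (h₂ : (m : ℝ) ≤ k + 1) :
    m = k + 1 := by
  have : k < m := by exact_mod_cast h₁
  have : m ≤ k + 1 := by exact_mod_cast h₂
  omega

lemma Set.OrdConnected.mem_Ioo_of_forall_intCast_notMem {S : Set ℝ} (hS : S.OrdConnected)
    (hZ : ∀ m : ℤ, (m : ℝ) ∉ S) {k : ℤ} {a b : ℝ} (ha : a ∈ S) (hb : b ∈ S)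
    (hak : a ∈ Set.Ioo (k : ℝ) (k + 1)) : b ∈ Set.Ioo (k : ℝ) (k + 1) := by
  constructor
  · by_contra! h
    exact hZ k (hS.out hb ha ⟨h, hak.1.le⟩)
  · by_contra! h
    exact hZ (k + 1) (by push_cast; exact hS.out ha hb ⟨hak.2.le, h⟩)

namespace RootSystemData

open Filter Topology

variable {ℓ : ℕ} (R : RootSystemData ℓ)

lemma pos_finite : R.pos.Finite := R.finite.subset R.pos_subset

lemma ne_zero_of_mem_pos {β : V ℓ} (hβ : β ∈ R.pos) : β ≠ 0 :=
  fun h => R.nonzero (h ▸ R.pos_subset hβ)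

lemma eq_of_mem_span_singleton {β γ : V ℓ} (hβ : β ∈ R.pos) (hγ : γ ∈ R.pos)
    (h : γ ∈ ℝ ∙ β) : γ = β := by
  obtain ⟨t, rfl⟩ := Submodule.mem_span_singleton.1 h
  rcases R.reduced β (R.pos_subset hβ) t (R.pos_subset hγ) with rfl | rfl
  · exact one_smul ℝ β
  · rw [neg_one_smul] at hγ
    exact absurd hγ ((R.pos_choice β (R.pos_subset hβ)).1 hβ)

def wallSystem (k : V ℓ → ℤ) : Finset (V ℓ × ℝ) :=
  R.pos_finite.toFinset.image (fun β => (β, (k β : ℝ) + 1)) ∪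
    R.pos_finite.toFinset.image (fun β => (-β, -(k β : ℝ)))

def halfOpenBox (k : V ℓ → ℤ) : Set (V ℓ) :=
  {y | ∀ β ∈ R.pos, (k β : ℝ) < ⟪β, y⟫ ∧ ⟪β, y⟫ ≤ k β + 1}

variable {R}

lemma mem_wallSystem {k : V ℓ → ℤ} {p : V ℓ × ℝ} :
    p ∈ R.wallSystem k ↔ ∃ β ∈ R.pos, p = (β, (k β : ℝ) + 1) ∨ p = (-β, -(k β : ℝ)) := by
  simp only [wallSystem, Finset.mem_union, Finset.mem_image, Set.Finite.mem_toFinset]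
  aesop

lemma forall_mem_wallSystem {k : V ℓ → ℤ} {Q : V ℓ × ℝ → Prop} :
    (∀ p ∈ R.wallSystem k, Q p) ↔ ∀ β ∈ R.pos, Q (β, (k β : ℝ) + 1) ∧ Q (-β, -(k β : ℝ)) := by
  simp only [mem_wallSystem]
  aesop

lemma mem_polyhedron_wallSystem {k : V ℓ → ℤ} {y : V ℓ} :
    y ∈ polyhedron (R.wallSystem k) ↔ ∀ β ∈ R.pos, (k β : ℝ) ≤ ⟪β, y⟫ ∧ ⟪β, y⟫ ≤ k β + 1 := by
  simp only [polyhedron, Set.mem_ofPred_eq, forall_mem_wallSystem, inner_neg_left, neg_le_neg_iff,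
    and_comm]

lemma mem_openPolyhedron_wallSystem {k : V ℓ → ℤ} {y : V ℓ} :
    y ∈ openPolyhedron (R.wallSystem k) ↔
      ∀ β ∈ R.pos, (k β : ℝ) < ⟪β, y⟫ ∧ ⟪β, y⟫ < k β + 1 := by
  simp only [openPolyhedron, Set.mem_ofPred_eq, forall_mem_wallSystem, inner_neg_left,
    neg_lt_neg_iff, and_comm]

lemma mem_openPolyhedron_wallSystem_floor {x : V ℓ} (hx : x ∈ R.AffC) :
    x ∈ openPolyhedron (R.wallSystem fun β => ⌊⟪β, x⟫⌋) :=
  mem_openPolyhedron_wallSystem.2 fun β hβ =>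
    ⟨(Int.floor_le _).lt_of_ne fun h => hx β hβ _ h.symm, Int.lt_floor_add_one _⟩

lemma openPolyhedron_wallSystem_subset_affC (k : V ℓ → ℤ) :
    openPolyhedron (R.wallSystem k) ⊆ R.AffC := by
  intro y hy β hβ m hm
  obtain ⟨h₁, h₂⟩ := mem_openPolyhedron_wallSystem.1 hy β hβ
  rw [hm] at h₁ h₂
  rw [Int.eq_add_one_of_cast_lt_of_le h₁ h₂.le] at h₂
  push_cast at h₂
  exact h₂.false

lemma convex_halfOpenBox (k : V ℓ → ℤ) : Convex ℝ (R.halfOpenBox k) := by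
  simp only [halfOpenBox, Set.ofPred_forall, Set.ofPred_and]
  exact convex_iInter₂ fun β _ => (convex_halfSpace_gt (innerₗ _ β).isLinear _).inter
    (convex_halfSpace_le (innerₗ _ β).isLinear _)

variable {k : V ℓ → ℤ} {x : V ℓ}

lemma connectedComponentIn_affC (hx : x ∈ openPolyhedron (R.wallSystem k)) :
    connectedComponentIn R.AffC x = openPolyhedron (R.wallSystem k) := by
  have hxA := R.openPolyhedron_wallSystem_subset_affC k hx
  refine Set.Subset.antisymm (fun y hy => ?_) ((convex_openPolyhedron _).isPreconnected
    |>.subset_connectedComponentIn hx (R.openPolyhedron_wallSystem_subset_affC k))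
  rw [mem_openPolyhedron_wallSystem] at hx ⊢
  intro β hβ
  have hS : ((fun v => ⟪β, v⟫) '' connectedComponentIn R.AffC x).OrdConnected :=
    (isPreconnected_connectedComponentIn.image _
      (continuous_const.inner continuous_id).continuousOn).ordConnected
  refine hS.mem_Ioo_of_forall_intCast_notMem ?_ (Set.mem_image_of_mem _
    (mem_connectedComponentIn hxA)) (Set.mem_image_of_mem _ hy) (hx β hβ)
  rintro m ⟨v, hv, hvm⟩
  exact connectedComponentIn_subset _ _ hv β hβ m hvm

lemma pc_openPolyhedron_wallSystem (hx : x ∈ openPolyhedron (R.wallSystem k)) :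
    R.pc (openPolyhedron (R.wallSystem k)) = R.halfOpenBox k := by
  ext y
  simp only [pc, closure_openPolyhedron hx, mem_polyhedron_wallSystem]
  constructor
  · rintro ⟨hy, hwall⟩ β hβ
    refine ⟨(hy β hβ).1.lt_of_ne fun h => ?_, (hy β hβ).2⟩
    exact (hwall β hβ (k β) h.symm x hx).not_gt (mem_openPolyhedron_wallSystem.1 hx β hβ).1
  · intro hy
    refine ⟨fun β hβ => ⟨(hy β hβ).1.le, (hy β hβ).2⟩, fun β hβ m hm z hz => ?_⟩
    obtain ⟨h₁, h₂⟩ := hy β hβ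
    rw [hm] at h₁ h₂
    rw [Int.eq_add_one_of_cast_lt_of_le h₁ h₂]
    push_cast
    exact (mem_openPolyhedron_wallSystem.1 hz β hβ).2

lemma exists_wall_of_face (hx : x ∈ openPolyhedron (R.wallSystem k))
    {I : Finset (V ℓ × ℝ)} (hIE : I ⊆ R.wallSystem k)
    (hI : polyhedron I = polyhedron (R.wallSystem k)) {α δ : V ℓ} (hα : α ∈ R.pos)
    (hδ : δ ∈ R.pos) (hαδ : α ≠ δ) {m : ℤ}
    (hne : (R.pc (openPolyhedron (R.wallSystem k)) ∩ Hyp α m).Nonempty) :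
    ∃ β ∈ R.pos, β ≠ δ ∧ (β, (k β : ℝ) + 1) ∈ I ∧
      R.pc (openPolyhedron (R.wallSystem k)) ∩ Hyp α m ⊆ Hyp β (k β + 1) := by
  rw [R.pc_openPolyhedron_wallSystem hx] at hne ⊢
  have hconv : Convex ℝ (R.halfOpenBox k ∩ Hyp α m) :=
    (R.convex_halfOpenBox k).inter (convex_hyperplane (innerₗ _ α).isLinear _)
  obtain ⟨x₀, hx₀, hx₀_tight⟩ := exists_forall_inner_eq_of_inner_eq hconv hne
    R.pos_finite.toFinset (fun β => (k β : ℝ) + 1)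
    fun y hy β hβ => (hy.1 β (R.pos_finite.mem_toFinset.1 hβ)).2
  obtain ⟨y, hy⟩ := hne
  have hm : m = k α + 1 := Int.eq_add_one_of_cast_lt_of_le
    (hy.2 ▸ (hy.1 α hα).1) (hy.2 ▸ (hy.1 α hα).2)
  have hx₀I : x₀ ∈ polyhedron I := by
    rw [hI, mem_polyhedron_wallSystem]
    exact fun β hβ => ⟨(hx₀.1 β hβ).1.le, (hx₀.1 β hβ).2⟩
  have hmax : IsMaxOn (fun y => ⟪α, y⟫) (polyhedron I) x₀ := fun z hz => by
    rw [hI, mem_polyhedron_wallSystem] at hz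
    change ⟪α, z⟫ ≤ ⟪α, x₀⟫
    rw [hx₀.2, hm]
    push_cast
    exact (hz α hα).2
  obtain ⟨p, hpI, hpδ, hp⟩ := exists_inner_eq_of_isMaxOn hx₀I hmax
    fun h => hαδ (R.eq_of_mem_span_singleton hδ hα h)
  obtain ⟨β, hβ, rfl | rfl⟩ := mem_wallSystem.1 (hIE hpI)
  · refine ⟨β, hβ, hpδ, hpI, fun z hz => ?_⟩
    have := hx₀_tight β (R.pos_finite.mem_toFinset.2 hβ) hp z hz
    simp only [Hyp, Set.mem_ofPred_eq]
    push_cast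
    exact this
  · simp only [inner_neg_left, neg_inj] at hp
    exact absurd hp (hx₀.1 β hβ).1.ne'

lemma isFacetOf_of_irredundant (hx : x ∈ openPolyhedron (R.wallSystem k))
    {I : Finset (V ℓ × ℝ)} (hIE : I ⊆ R.wallSystem k)
    (hI : polyhedron I = polyhedron (R.wallSystem k)) {β : V ℓ} (hβ : β ∈ R.pos)
    (hβI : (β, (k β : ℝ) + 1) ∈ I)
    (hirr : polyhedron (I.erase (β, (k β : ℝ) + 1)) ≠ polyhedron I) :
    R.IsFacetOf (openPolyhedron (R.wallSystem k))
      (R.pc (openPolyhedron (R.wallSystem k)) ∩ Hyp β (k β + 1)) := by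
  obtain ⟨z, hzU, hz⟩ := exists_inner_eq_of_irredundant (openPolyhedron_anti hIE hx) hβI hirr
  set U := openPolyhedron (I.erase (β, (k β : ℝ) + 1))
  have hU : ∀ y ∈ U, U ∈ 𝓝 y := fun y hy => (isOpen_openPolyhedron _).mem_nhds hy
  have hUbox : ∀ y ∈ U, ⟪β, y⟫ = k β + 1 → y ∈ polyhedron (R.wallSystem k) := by
    intro y hy hyβ
    rw [← hI]
    intro p hp
    rcases eq_or_ne p (β, (k β : ℝ) + 1) with rfl | hpβ
    · exact hyβ.le
    · exact (hy p (Finset.mem_erase.2 ⟨hpβ, hp⟩)).le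
  have hUS : ∀ y ∈ U, ⟪β, y⟫ = k β + 1 →
      y ∈ R.pc (openPolyhedron (R.wallSystem k)) ∩ Hyp β (k β + 1) := by
    intro y hy hyβ
    rw [R.pc_openPolyhedron_wallSystem hx]
    refine ⟨fun γ hγ => ⟨?_, (mem_polyhedron_wallSystem.1 (hUbox y hy hyβ) γ hγ).2⟩, ?_⟩
    · rcases eq_or_ne γ β with rfl | hγβ
      · linarith
      -- a lower wall of `γ` meeting the facet would cut it, as `γ` is not parallel to `β`
      exact lt_inner_of_le_on_hyperplane (hU y hy) hyβ
        (fun w hw hwβ => (mem_polyhedron_wallSystem.1 (hUbox w hw hwβ) γ hγ).1)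
        fun h => hγβ (R.eq_of_mem_span_singleton hβ hγ h)
    · simp only [Hyp, Set.mem_ofPred_eq]
      push_cast
      exact hyβ
  refine ⟨⟨β, hβ, _, rfl⟩, ?_⟩
  rw [vectorSpan_eq_orthogonal_of_nhds (fun y hy => ?_) (hU z hzU) hz hUS]
  · rw [finrank_orthogonal_span_singleton_eq_sub_one (R.ne_zero_of_mem_pos hβ),
      finrank_euclideanSpace_fin]
  · have : ⟪β, y⟫ = ((k β + 1 : ℤ) : ℝ) := hy.2
    push_cast at this
    exact this

end RootSystemData

theorem pos_remove_one_root_is_compatible_general {ℓ : ℕ} (R : RootSystemData ℓ)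
    (δ : V ℓ) (hδ : δ ∈ R.pos) :
    R.Compatible (R.pos \ {δ}) := by
  rintro A ⟨x, hx, rfl⟩ - α ⟨hα, hαδ⟩ m hne
  have hxk := R.mem_openPolyhedron_wallSystem_floor hx
  rw [R.connectedComponentIn_affC hxk] at hne ⊢
  obtain ⟨I, hIE, hI, hirr⟩ := exists_irredundant_subset (R.wallSystem fun β => ⌊⟪β, x⟫⌋)
  obtain ⟨β, hβ, hβδ, hβI, hface⟩ := R.exists_wall_of_face hxk hIE hI hα hδ hαδ hne
  exact ⟨β, ⟨hβ, hβδ⟩, _, fun y hy => ⟨hy.1, hface hy⟩,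
    R.isFacetOf_of_irredundant hxk hIE hI hβ hβI (hirr _ hβI)⟩

/-- removing a single root `δ` from `Φ⁺` yields a compatible subset. -/
theorem pos_remove_one_root_is_compatible {ℓ : ℕ} (hℓ : 1 ≤ ℓ) (R : RootSystemData ℓ)
    (δ : V ℓ) (hδ : δ ∈ R.pos) :
    R.Compatible (R.pos \ {δ}) :=
  pos_remove_one_root_is_compatible_general R δ hδ
end
end
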